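/- arXiv:1701.09054 — 17 statements merged into one kernel-verified Lean document; each statement's English description precedes it below -/
import Mathlib

section
/- Let A be an n×m complex matrix and D, E be m×n complex matrices. Then A is right (D,E)-invertible if and only if rank(E) = rank(EAD). -/
open Matrix

lemma fac {a b c : ℕ} (M : Matrix (Fin a) (Fin b) ℂ) (N : Matrix (Fin a) (Fin c) ℂ)
    (h : LinearMap.range M.mulVecLin ≤ LinearMap.range N.mulVecLin) :
    ∃ C : Matrix (Fin c) (Fin b) ℂ, M = N * C := by
  obtain ⟨g, hg⟩ := N.mulVecLin.rangeRestrict.exists_rightInverse_of_surjective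
    (LinearMap.range_rangeRestrict _)
  let f' := M.mulVecLin.codRestrict (LinearMap.range N.mulVecLin) (fun x => h ⟨x, rfl⟩)
  refine ⟨LinearMap.toMatrix' (g ∘ₗ f'), ?_⟩
  apply Matrix.toLin'.injective
  simp only [Matrix.toLin'_apply', Matrix.mulVecLin_mul]
  rw [← Matrix.toLin'_apply' (LinearMap.toMatrix' (g ∘ₗ f')), Matrix.toLin'_toMatrix']
  refine LinearMap.ext fun x => ?_
  have := congrFun (congrArg (⇑) hg) (f' x)
  simp only [LinearMap.comp_apply, LinearMap.id_apply] at this ⊢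
  have : N.mulVecLin.rangeRestrict (g (f' x)) = f' x := this
  have h2 : (N.mulVecLin (g (f' x)) : Fin a → ℂ) = (f' x : Fin a → ℂ) :=
    congrArg Subtype.val this
  exact h2.symm

theorem stmt0 (n m : ℕ) (A : Matrix (Fin n) (Fin m) ℂ) (D E : Matrix (Fin m) (Fin n) ℂ) :
    (∃ B : Matrix (Fin m) (Fin n) ℂ, E * A * B = E ∧
      LinearMap.range B.mulVecLin ≤ LinearMap.range D.mulVecLin) ↔
    E.rank = (E * A * D).rank := by
  constructor
  · rintro ⟨B, hEAB, hr⟩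
    obtain ⟨C, rfl⟩ := fac B D hr
    have h1 : E = E * A * D * C := by
      rw [Matrix.mul_assoc (E * A) D C]; exact hEAB.symm
    refine le_antisymm ?_ ?_
    · conv_lhs => rw [h1]
      exact Matrix.rank_mul_le_left _ _
    · rw [Matrix.mul_assoc]
      exact Matrix.rank_mul_le_left _ _
  · intro h
    have hle : LinearMap.range (E * A * D).mulVecLin ≤ LinearMap.range E.mulVecLin := by
      rw [Matrix.mul_assoc, Matrix.mulVecLin_mul]
      exact LinearMap.range_comp_le_range _ _
    have heq : LinearMap.range (E * A * D).mulVecLin = LinearMap.range E.mulVecLin :=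
      Submodule.eq_of_le_of_finrank_le hle h.le
    obtain ⟨C, hC⟩ := fac E (E * A * D) heq.ge
    refine ⟨D * C, ?_, ?_⟩
    · rw [← Matrix.mul_assoc]
      exact hC.symm
    · rw [Matrix.mulVecLin_mul]
      exact LinearMap.range_comp_le_range _ _
end

section
/- Let A be an n×m complex matrix and D, E be m×n complex matrices. Then A is right (D,E)-invertible if and only if C^n = range(AD) + ker(E). -/
open Matrix

theorem stmt1 (n m : ℕ) (A : Matrix (Fin n) (Fin m) ℂ) (D E : Matrix (Fin m) (Fin n) ℂ) :
    (∃ B : Matrix (Fin m) (Fin n) ℂ, E * A * B = E ∧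
      LinearMap.range B.mulVecLin ≤ LinearMap.range D.mulVecLin) ↔
    LinearMap.range (A * D).mulVecLin ⊔ LinearMap.ker E.mulVecLin = ⊤ := by
  constructor
  · rintro ⟨B, hEAB, hr⟩
    rw [eq_top_iff]
    intro x _
    obtain ⟨y, hy⟩ := hr ⟨x, rfl⟩
    refine Submodule.mem_sup.2 ⟨(A * D).mulVecLin y, ⟨y, rfl⟩,
      x - A.mulVec (B.mulVec x), ?_, ?_⟩
    · have : (E * A * B).mulVec x = E.mulVec x := by rw [hEAB]
      simp only [← mulVec_mulVec] at this
      simp only [LinearMap.mem_ker, mulVecLin_apply, mulVec_sub, ← mulVec_mulVec]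
      rw [this, sub_self]
    · simp only [mulVecLin_apply, ← mulVec_mulVec] at hy ⊢
      rw [hy]
      abel
  · intro h
    have hx : ∀ x : Fin n → ℂ, ∃ y v, E.mulVec v = 0 ∧ x = (A * D).mulVec y + v := by
      intro x
      have : x ∈ LinearMap.range (A * D).mulVecLin ⊔ LinearMap.ker E.mulVecLin := by
        rw [h]; trivial
      obtain ⟨u, ⟨y, hy⟩, v, hv, huv⟩ := Submodule.mem_sup.1 this
      exact ⟨y, v, hv, by rw [← huv, ← hy]; rfl⟩
    choose y v hv hxy using hx
    set C : Matrix (Fin n) (Fin n) ℂ :=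
      Matrix.of (fun j i => y (Pi.single i 1) j) with hC
    refine ⟨D * C, ?_, ?_⟩
    · ext j i
      have h1 : (E * A * (D * C)) j i = ((E * A * D).mulVec (fun k => C k i)) j := by
        simp [Matrix.mul_apply, Matrix.mulVec, dotProduct, Matrix.mul_assoc,
          Finset.mul_sum, Finset.sum_mul, mul_assoc]
        rw [Finset.sum_comm]
      have h2 : (fun k => C k i) = y (Pi.single i 1) := rfl
      have key : (E * A * D).mulVec (y (Pi.single i 1)) = E.mulVec (Pi.single i 1) := by
        have hdec := hxy (Pi.single i 1)
        have : E.mulVec (Pi.single i 1) =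
            E.mulVec ((A * D).mulVec (y (Pi.single i 1)) + v (Pi.single i 1)) := by
          rw [← hdec]
        rw [mulVec_add, hv, add_zero, mulVec_mulVec, ← Matrix.mul_assoc] at this
        exact this.symm
      rw [h1, h2, key]
      simp [mulVec_single]
    · rintro w ⟨x, rfl⟩
      exact ⟨C.mulVec x, by simp [mulVecLin_apply, ← mulVec_mulVec]⟩
end

section
/- Let A be an n×m complex matrix and D, E be m×n complex matrices. Then A is left (D,E)-invertible if and only if ker(D) = ker(EAD). -/
open Matrix

private lemma factor_through {K V W U : Type*} [Field K] [AddCommGroup V] [Module K V]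
    [AddCommGroup W] [Module K W] [AddCommGroup U] [Module K U]
    (f : V →ₗ[K] W) (g : V →ₗ[K] U) (h : LinearMap.ker f ≤ LinearMap.ker g) :
    ∃ φ : W →ₗ[K] U, φ ∘ₗ f = g := by
  let q := (LinearMap.ker f).mkQ
  let fbar : (V ⧸ LinearMap.ker f) →ₗ[K] W := (LinearMap.ker f).liftQ f le_rfl
  have hfbar : LinearMap.ker fbar = ⊥ := Submodule.ker_liftQ_eq_bot _ _ _ le_rfl
  obtain ⟨l, hl⟩ := fbar.exists_leftInverse_of_injective hfbar
  let gbar : (V ⧸ LinearMap.ker f) →ₗ[K] U := (LinearMap.ker f).liftQ g h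
  refine ⟨gbar ∘ₗ l, ?_⟩
  have hfq : fbar ∘ₗ q = f := Submodule.liftQ_mkQ _ _ _
  ext v
  have h1 : fbar (q v) = f v := LinearMap.congr_fun hfq v
  have h2 : l (fbar (q v)) = q v := LinearMap.congr_fun hl (q v)
  simp only [LinearMap.comp_apply, ← h1, h2]
  exact rfl

theorem stmt2 (n m : ℕ) (A : Matrix (Fin n) (Fin m) ℂ) (D E : Matrix (Fin m) (Fin n) ℂ) :
    (∃ C : Matrix (Fin m) (Fin n) ℂ, C * A * D = D ∧
      LinearMap.ker E.mulVecLin ≤ LinearMap.ker C.mulVecLin) ↔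
    LinearMap.ker D.mulVecLin = LinearMap.ker (E * A * D).mulVecLin := by
  constructor
  · rintro ⟨C, hCAD, hker⟩
    apply le_antisymm
    · intro x hx
      simp only [LinearMap.mem_ker, mulVecLin_apply] at hx ⊢
      simp only [← mulVec_mulVec, hx, mulVec_zero]
    · intro x hx
      simp only [LinearMap.mem_ker, mulVecLin_apply] at hx ⊢
      have h1 : E *ᵥ (A *ᵥ (D *ᵥ x)) = 0 := by
        simpa only [← mulVec_mulVec] using hx
      have h2 : C *ᵥ (A *ᵥ (D *ᵥ x)) = 0 := by
        have := hker (show A *ᵥ (D *ᵥ x) ∈ LinearMap.ker E.mulVecLin by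
          simpa [mulVecLin_apply] using h1)
        simpa [mulVecLin_apply] using this
      calc D *ᵥ x = (C * A * D) *ᵥ x := by rw [hCAD]
        _ = C *ᵥ (A *ᵥ (D *ᵥ x)) := by simp only [← mulVec_mulVec]
        _ = 0 := h2
  · intro hker
    obtain ⟨φ, hφ⟩ := factor_through (E * A * D).mulVecLin D.mulVecLin hker.ge
    refine ⟨LinearMap.toMatrix' φ * E, ?_, ?_⟩
    · apply Matrix.toLin'.injective
      rw [Matrix.toLin'_apply', Matrix.toLin'_apply']
      have : LinearMap.toMatrix' φ * E * A * D = LinearMap.toMatrix' φ * (E * A * D) := by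
        simp [Matrix.mul_assoc]
      rw [this, mulVecLin_mul, ← hφ]
      congr 1
      rw [← Matrix.toLin'_apply', Matrix.toLin'_toMatrix']
    · intro x hx
      simp only [LinearMap.mem_ker, mulVecLin_mul, LinearMap.comp_apply] at hx ⊢
      rw [hx]
      simp
end

section
/- Let A be an n×m complex matrix and D, E be m×n complex matrices. Then A is left (D,E)-invertible if and only if A* (the conjugate transpose) is right (E*, D*)-invertible; moreover C is a left (D,E)-inverse of A if and only if C* is a right (E*, D*)-inverse of A*. -/
open Matrix

/-- Factorization: if `ker g ≤ ker f` then `f` factors through `g` (vector spaces). -/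
lemma exists_comp_of_ker_le_ker {K V W U : Type*} [Field K] [AddCommGroup V] [Module K V]
    [AddCommGroup W] [Module K W] [AddCommGroup U] [Module K U]
    (f : V →ₗ[K] W) (g : V →ₗ[K] U) (hk : LinearMap.ker g ≤ LinearMap.ker f) :
    ∃ h : U →ₗ[K] W, f = h ∘ₗ g := by
  let h₀ : (V ⧸ LinearMap.ker g) →ₗ[K] W := (LinearMap.ker g).liftQ f hk
  let e : (V ⧸ LinearMap.ker g) ≃ₗ[K] LinearMap.range g := g.quotKerEquivRange
  obtain ⟨H, hH⟩ := LinearMap.exists_extend (h₀ ∘ₗ (e.symm : LinearMap.range g →ₗ[K] _))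
  refine ⟨H, ?_⟩
  ext v
  have h1 : H (g v) = (h₀ ∘ₗ (e.symm : LinearMap.range g →ₗ[K] _)) ⟨g v, ⟨v, rfl⟩⟩ := by
    rw [← hH]; rfl
  have h2 : e ((LinearMap.ker g).mkQ v) = ⟨g v, ⟨v, rfl⟩⟩ := by
    ext
    exact g.quotKerEquivRange_apply_mk v
  have h3 : e.symm ⟨g v, ⟨v, rfl⟩⟩ = (LinearMap.ker g).mkQ v := by
    rw [← h2, LinearEquiv.symm_apply_apply]
  rw [LinearMap.comp_apply, h1, LinearMap.comp_apply, LinearEquiv.coe_coe, h3]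
  rfl

lemma key_ker_to_fact {n m : ℕ} (C E : Matrix (Fin m) (Fin n) ℂ)
    (h : LinearMap.ker E.mulVecLin ≤ LinearMap.ker C.mulVecLin) :
    ∃ X : Matrix (Fin m) (Fin m) ℂ, C = X * E := by
  obtain ⟨h, hh⟩ := exists_comp_of_ker_le_ker C.mulVecLin E.mulVecLin h
  refine ⟨LinearMap.toMatrix' h, ?_⟩
  have h2 : C = LinearMap.toMatrix' C.mulVecLin := (LinearMap.toMatrix'_toLin' C).symm
  rw [h2, hh, LinearMap.toMatrix'_comp]
  congr 1
  exact LinearMap.toMatrix'_toLin' E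

lemma key_range_to_ker {n m : ℕ} (C E : Matrix (Fin m) (Fin n) ℂ)
    (h : LinearMap.range Cᴴ.mulVecLin ≤ LinearMap.range Eᴴ.mulVecLin) :
    LinearMap.ker E.mulVecLin ≤ LinearMap.ker C.mulVecLin := by
  intro x hx
  simp only [LinearMap.mem_ker, mulVecLin_apply] at hx ⊢
  funext i
  obtain ⟨z, hz⟩ := h ⟨Pi.single i 1, rfl⟩
  simp only [mulVecLin_apply] at hz
  have key : ∀ (M : Matrix (Fin m) (Fin n) ℂ) (y : Fin m → ℂ) (v : Fin n → ℂ),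
      star (Mᴴ.mulVec y) ⬝ᵥ v = star y ⬝ᵥ M.mulVec v := by
    intro M y v
    rw [star_mulVec, conjTranspose_conjTranspose, ← dotProduct_mulVec]
  calc C.mulVec x i = star (Pi.single i 1 : Fin m → ℂ) ⬝ᵥ C.mulVec x := by
        simp [Pi.single_apply, dotProduct]
    _ = star (Cᴴ.mulVec (Pi.single i 1)) ⬝ᵥ x := (key C _ x).symm
    _ = star (Eᴴ.mulVec z) ⬝ᵥ x := by rw [hz]
    _ = star z ⬝ᵥ E.mulVec x := key E z x
    _ = 0 := by rw [hx]; simp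

theorem stmt4 (n m : ℕ) (A : Matrix (Fin n) (Fin m) ℂ) (D E : Matrix (Fin m) (Fin n) ℂ) :
    ((∃ C : Matrix (Fin m) (Fin n) ℂ, C * A * D = D ∧
        LinearMap.ker E.mulVecLin ≤ LinearMap.ker C.mulVecLin) ↔
      (∃ B : Matrix (Fin n) (Fin m) ℂ, Dᴴ * Aᴴ * B = Dᴴ ∧
        LinearMap.range B.mulVecLin ≤ LinearMap.range Eᴴ.mulVecLin)) ∧
    (∀ C : Matrix (Fin m) (Fin n) ℂ,
      (C * A * D = D ∧ LinearMap.ker E.mulVecLin ≤ LinearMap.ker C.mulVecLin) ↔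
      (Dᴴ * Aᴴ * Cᴴ = Dᴴ ∧
        LinearMap.range Cᴴ.mulVecLin ≤ LinearMap.range Eᴴ.mulVecLin)) := by
  have main : ∀ C : Matrix (Fin m) (Fin n) ℂ,
      (C * A * D = D ∧ LinearMap.ker E.mulVecLin ≤ LinearMap.ker C.mulVecLin) ↔
      (Dᴴ * Aᴴ * Cᴴ = Dᴴ ∧
        LinearMap.range Cᴴ.mulVecLin ≤ LinearMap.range Eᴴ.mulVecLin) := by
    intro C
    constructor
    · rintro ⟨h1, h2⟩
      obtain ⟨X, rfl⟩ := key_ker_to_fact C E h2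
      constructor
      · have := congrArg conjTranspose h1
        simpa [conjTranspose_mul, Matrix.mul_assoc] using this
      · rintro x ⟨v, rfl⟩
        exact ⟨Xᴴ.mulVecLin v, by simp [conjTranspose_mul, mulVecLin_mul]⟩
    · rintro ⟨h1, h2⟩
      refine ⟨?_, key_range_to_ker C E h2⟩
      have := congrArg conjTranspose h1
      simpa [conjTranspose_mul, Matrix.mul_assoc] using this
  refine ⟨?_, main⟩
  constructor
  · rintro ⟨C, hC⟩
    exact ⟨Cᴴ, (main C).mp hC⟩
  · rintro ⟨B, h1, h2⟩
    refine ⟨Bᴴ, (main Bᴴ).mpr ?_⟩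
    simpa using ⟨h1, h2⟩
end

section
/- Let A be an n×m complex matrix and D, E be m×n complex matrices. Then A is both left and right (D,E)-invertible if and only if range(EAD) = range(E) and ker(EAD) = ker(D). Furthermore, in this case rank(E) = rank(D). -/
/-!
Left `(D, E)`-invertibility of `A` is equivalent to `ker (E A D) = ker D`, and right
`(D, E)`-invertibility to `range (E A D) = range E`. In each case one direction is a direct
computation; for the other, the kernel (resp. range) condition lets `D` factor as `G (E A D)`
(resp. `E` as `(E A D) H`), and `C = G E` (resp. `B = D H`) is the required inverse. Then
`rank E = rank (E A D) = rank D`, the last step by rank–nullity.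
-/

open Matrix

namespace LinearMap

variable {K V V' W W' : Type*} [Field K] [AddCommGroup V] [AddCommGroup V'] [AddCommGroup W]
  [AddCommGroup W'] [Module K V] [Module K V'] [Module K W] [Module K W']

/-- `f` induces an injection `V ⧸ ker f → W`; a left inverse of it, followed by the map that
`g` induces on `V ⧸ ker f`, is the required factor. -/
theorem exists_comp_eq_of_ker_le (f : V →ₗ[K] W) (g : V →ₗ[K] W') (h : ker f ≤ ker g) :
    ∃ G : W →ₗ[K] W', G ∘ₗ f = g := by
  obtain ⟨l, hl⟩ := ((ker f).liftQ f le_rfl).exists_leftInverse_of_injective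
    (Submodule.ker_liftQ_eq_bot _ _ _ le_rfl)
  refine ⟨(ker f).liftQ g h ∘ₗ l, ?_⟩
  calc (ker f).liftQ g h ∘ₗ l ∘ₗ f
      = (ker f).liftQ g h ∘ₗ (l ∘ₗ (ker f).liftQ f le_rfl) ∘ₗ (ker f).mkQ := rfl
    _ = g := by rw [hl, id_comp, Submodule.liftQ_mkQ]

theorem exists_comp_eq_of_range_le (f : V →ₗ[K] W) (g : V' →ₗ[K] W)
    (h : range g ≤ range f) : ∃ H : V' →ₗ[K] V, f ∘ₗ H = g := by
  obtain ⟨H, hH⟩ := Module.projective_lifting_property f.rangeRestrict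
    (g.codRestrict (range f) fun v => h (mem_range_self g v)) f.surjective_rangeRestrict
  exact ⟨H, ext fun v => congrArg Subtype.val (LinearMap.congr_fun hH v)⟩

end LinearMap

namespace Matrix

variable {K : Type*} [Field K] {l m n : Type*} [Fintype m] [Fintype n]

theorem exists_mul_eq_of_ker_le {M : Matrix m n K} {N : Matrix l n K}
    (h : LinearMap.ker M.mulVecLin ≤ LinearMap.ker N.mulVecLin) :
    ∃ G : Matrix l m K, G * M = N := by
  classical
  obtain ⟨G, hG⟩ := LinearMap.exists_comp_eq_of_ker_le _ _ h
  refine ⟨LinearMap.toMatrix' G, toLin'.injective ?_⟩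
  rw [toLin'_mul, toLin'_toMatrix', toLin'_apply', toLin'_apply', hG]

theorem exists_mul_eq_of_range_le {M : Matrix l m K} {N : Matrix l n K}
    (h : LinearMap.range N.mulVecLin ≤ LinearMap.range M.mulVecLin) :
    ∃ H : Matrix m n K, M * H = N := by
  classical
  obtain ⟨H, hH⟩ := LinearMap.exists_comp_eq_of_range_le _ _ h
  refine ⟨LinearMap.toMatrix' H, toLin'.injective ?_⟩
  rw [toLin'_mul, toLin'_toMatrix', toLin'_apply', toLin'_apply', hH]

theorem rank_eq_of_ker_mulVecLin_eq {k : Type*} {M : Matrix l n K} {N : Matrix k n K}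
    (h : LinearMap.ker M.mulVecLin = LinearMap.ker N.mulVecLin) : M.rank = N.rank := by
  have hM := LinearMap.finrank_range_add_finrank_ker M.mulVecLin
  have hN := LinearMap.finrank_range_add_finrank_ker N.mulVecLin
  rw [h] at hM
  unfold rank
  omega

variable {p q r s : Type*} [Fintype p] [Fintype q] [Fintype r]

/-- `A` is left `(D, E)`-invertible. -/
def IsLeftInvertibleAlong (A : Matrix p q K) (D : Matrix q r K) (E : Matrix s p K) : Prop :=
  ∃ C : Matrix q p K, C * A * D = D ∧ LinearMap.ker E.mulVecLin ≤ LinearMap.ker C.mulVecLin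

/-- `A` is right `(D, E)`-invertible. -/
def IsRightInvertibleAlong (A : Matrix p q K) (D : Matrix q r K) (E : Matrix s p K) : Prop :=
  ∃ B : Matrix q p K, E * A * B = E ∧
    LinearMap.range B.mulVecLin ≤ LinearMap.range D.mulVecLin

theorem isLeftInvertibleAlong_iff_ker_eq [Fintype s] (A : Matrix p q K) (D : Matrix q r K)
    (E : Matrix s p K) :
    IsLeftInvertibleAlong A D E ↔
      LinearMap.ker (E * A * D).mulVecLin = LinearMap.ker D.mulVecLin := by
  constructor
  · rintro ⟨C, hCAD, hEC⟩
    refine le_antisymm ?_ (by rw [mulVecLin_mul]; exact LinearMap.ker_le_ker_comp _ _)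
    calc LinearMap.ker (E * A * D).mulVecLin
        = (LinearMap.ker E.mulVecLin).comap (A * D).mulVecLin := by
          rw [Matrix.mul_assoc, mulVecLin_mul, LinearMap.ker_comp]
      _ ≤ (LinearMap.ker C.mulVecLin).comap (A * D).mulVecLin := Submodule.comap_mono hEC
      _ = LinearMap.ker D.mulVecLin := by
          rw [← LinearMap.ker_comp, ← mulVecLin_mul, ← Matrix.mul_assoc, hCAD]
  · intro h
    obtain ⟨G, hG⟩ := exists_mul_eq_of_ker_le h.le
    refine ⟨G * E, by simpa only [Matrix.mul_assoc] using hG, ?_⟩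
    rw [mulVecLin_mul]
    exact LinearMap.ker_le_ker_comp _ _

theorem isRightInvertibleAlong_iff_range_eq (A : Matrix p q K) (D : Matrix q r K)
    (E : Matrix s p K) :
    IsRightInvertibleAlong A D E ↔
      LinearMap.range (E * A * D).mulVecLin = LinearMap.range E.mulVecLin := by
  constructor
  · rintro ⟨B, hEAB, hBD⟩
    refine le_antisymm
      (by rw [Matrix.mul_assoc, mulVecLin_mul]; exact LinearMap.range_comp_le_range _ _) ?_
    calc LinearMap.range E.mulVecLin
        = (LinearMap.range B.mulVecLin).map (E * A).mulVecLin := by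
          rw [← LinearMap.range_comp, ← mulVecLin_mul, hEAB]
      _ ≤ (LinearMap.range D.mulVecLin).map (E * A).mulVecLin := Submodule.map_mono hBD
      _ = LinearMap.range (E * A * D).mulVecLin := by
          rw [← LinearMap.range_comp, ← mulVecLin_mul]
  · intro h
    obtain ⟨H, hH⟩ := exists_mul_eq_of_range_le h.ge
    refine ⟨D * H, by simpa only [Matrix.mul_assoc] using hH, ?_⟩
    rw [mulVecLin_mul]
    exact LinearMap.range_comp_le_range _ _

end Matrix

theorem stmt5 (n m : ℕ) (A : Matrix (Fin n) (Fin m) ℂ) (D E : Matrix (Fin m) (Fin n) ℂ) :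
    (((∃ C : Matrix (Fin m) (Fin n) ℂ, C * A * D = D ∧
        LinearMap.ker E.mulVecLin ≤ LinearMap.ker C.mulVecLin) ∧
      (∃ B : Matrix (Fin m) (Fin n) ℂ, E * A * B = E ∧
        LinearMap.range B.mulVecLin ≤ LinearMap.range D.mulVecLin)) ↔
      (LinearMap.range (E * A * D).mulVecLin = LinearMap.range E.mulVecLin ∧
        LinearMap.ker (E * A * D).mulVecLin = LinearMap.ker D.mulVecLin)) ∧
    (((∃ C : Matrix (Fin m) (Fin n) ℂ, C * A * D = D ∧
        LinearMap.ker E.mulVecLin ≤ LinearMap.ker C.mulVecLin) ∧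
      (∃ B : Matrix (Fin m) (Fin n) ℂ, E * A * B = E ∧
        LinearMap.range B.mulVecLin ≤ LinearMap.range D.mulVecLin)) →
      E.rank = D.rank) := by
  have key : IsLeftInvertibleAlong A D E ∧ IsRightInvertibleAlong A D E ↔
      LinearMap.range (E * A * D).mulVecLin = LinearMap.range E.mulVecLin ∧
        LinearMap.ker (E * A * D).mulVecLin = LinearMap.ker D.mulVecLin :=
    ((isLeftInvertibleAlong_iff_ker_eq A D E).and
      (isRightInvertibleAlong_iff_range_eq A D E)).trans and_comm
  refine ⟨key, fun h => ?_⟩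
  obtain ⟨hrange, hker⟩ := key.mp h
  calc E.rank = (E * A * D).rank := by rw [rank, rank, hrange]
    _ = D.rank := rank_eq_of_ker_mulVecLin_eq hker
end

section
/- Let A ∈ C^{n×m} and D, E ∈ C^{m×n} be such that A is both left and right (D,E)-invertible. Then A has exactly one left (D,E)-inverse and exactly one right (D,E)-inverse, and they coincide. -/
open Matrix

private lemma key (n m : ℕ) (A : Matrix (Fin n) (Fin m) ℂ) (D E : Matrix (Fin m) (Fin n) ℂ)
    (C B : Matrix (Fin m) (Fin n) ℂ)
    (hC1 : C * A * D = D) (hC2 : LinearMap.ker E.mulVecLin ≤ LinearMap.ker C.mulVecLin)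
    (hB1 : E * A * B = E) (hB2 : LinearMap.range B.mulVecLin ≤ LinearMap.range D.mulVecLin) :
    C = B := by
  have hmv : ∀ x : Fin n → ℂ, C.mulVec x = B.mulVec x := by
    intro x
    -- x - A *ᵥ (B *ᵥ x) ∈ ker E
    have hk : E.mulVec (x - A.mulVec (B.mulVec x)) = 0 := by
      rw [mulVec_sub, mulVec_mulVec, mulVec_mulVec, hB1, sub_self]
    have hkC : C.mulVec (x - A.mulVec (B.mulVec x)) = 0 := hC2 hk
    rw [mulVec_sub, sub_eq_zero] at hkC
    -- B *ᵥ x ∈ range D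
    obtain ⟨y, hy⟩ := hB2 ⟨x, rfl⟩
    have hfix : C.mulVec (A.mulVec (B.mulVec x)) = B.mulVec x := by
      have := congrArg (fun M => M.mulVec y) hC1
      simp only [← mulVec_mulVec] at this
      rw [show B.mulVec x = D.mulVec y from hy.symm]
      exact this
    rw [hkC, hfix]
  ext i j
  have := congrFun (hmv (Pi.single j 1)) i
  simpa [mulVec_single] using this

theorem stmt6 (n m : ℕ) (A : Matrix (Fin n) (Fin m) ℂ) (D E : Matrix (Fin m) (Fin n) ℂ)
    (hl : ∃ C : Matrix (Fin m) (Fin n) ℂ, C * A * D = D ∧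
      LinearMap.ker E.mulVecLin ≤ LinearMap.ker C.mulVecLin)
    (hr : ∃ B : Matrix (Fin m) (Fin n) ℂ, E * A * B = E ∧
      LinearMap.range B.mulVecLin ≤ LinearMap.range D.mulVecLin) :
    ∃ R : Matrix (Fin m) (Fin n) ℂ,
      ((R * A * D = D ∧ LinearMap.ker E.mulVecLin ≤ LinearMap.ker R.mulVecLin) ∧
        ∀ C : Matrix (Fin m) (Fin n) ℂ,
          (C * A * D = D ∧ LinearMap.ker E.mulVecLin ≤ LinearMap.ker C.mulVecLin) → C = R) ∧
      ((E * A * R = E ∧ LinearMap.range R.mulVecLin ≤ LinearMap.range D.mulVecLin) ∧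
        ∀ B : Matrix (Fin m) (Fin n) ℂ,
          (E * A * B = E ∧ LinearMap.range B.mulVecLin ≤ LinearMap.range D.mulVecLin) → B = R) := by
  obtain ⟨C, hC1, hC2⟩ := hl
  obtain ⟨B, hB1, hB2⟩ := hr
  have hCB : C = B := key n m A D E C B hC1 hC2 hB1 hB2
  refine ⟨B, ⟨⟨hCB ▸ hC1, hCB ▸ hC2⟩, fun C' ⟨h1, h2⟩ => key n m A D E C' B h1 h2 hB1 hB2⟩,
    ⟨⟨hB1, hB2⟩, fun B' ⟨h1, h2⟩ => ?_⟩⟩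
  have := key n m A D E C B' hC1 hC2 h1 h2
  rw [← this, hCB]
end

section
/- Let A ∈ C^{n×m} and D ∈ C^{m×n}. Then A is right invertible along D if and only if range(D) = range(DAD), which holds if and only if C^n = ker(D) ⊕ range(AD). -/
open Matrix

section Aux

variable {K U V W : Type*} [Field K] [AddCommGroup U] [AddCommGroup V] [AddCommGroup W]
  [Module K U] [Module K V] [Module K W]

/-- If `range q ≤ range p` then `q` factors through `p`. -/
lemma aux_exists_factor (p : V →ₗ[K] W) (q : U →ₗ[K] W)
    (h : LinearMap.range q ≤ LinearMap.range p) :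
    ∃ s : U →ₗ[K] V, p ∘ₗ s = q := by
  obtain ⟨r, hr⟩ := p.rangeRestrict.exists_rightInverse_of_surjective p.range_rangeRestrict
  refine ⟨r ∘ₗ q.codRestrict (LinearMap.range p) (fun w => h (LinearMap.mem_range_self q w)), ?_⟩
  ext w
  have h1 : p.rangeRestrict (r (q.codRestrict (LinearMap.range p)
      (fun w => h (LinearMap.mem_range_self q w)) w)) =
      q.codRestrict (LinearMap.range p) (fun w => h (LinearMap.mem_range_self q w)) w :=
    congrFun (congrArg (DFunLike.coe) hr) _
  have h2 := congrArg (Subtype.val) h1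
  simpa using h2

lemma aux_iff1 (f : V →ₗ[K] W) (g : W →ₗ[K] V) :
    (∃ h : V →ₗ[K] W, f ∘ₗ g ∘ₗ h = f ∧ LinearMap.range h ≤ LinearMap.range f) ↔
      LinearMap.range f = LinearMap.range (f ∘ₗ g ∘ₗ f) := by
  constructor
  · rintro ⟨h, hfgh, hrange⟩
    refine le_antisymm ?_ ?_
    · rintro _ ⟨x, rfl⟩
      obtain ⟨z, hz⟩ := hrange (LinearMap.mem_range_self h x)
      refine ⟨z, ?_⟩
      have := congrFun (congrArg (DFunLike.coe) hfgh) x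
      simp only [LinearMap.comp_apply] at this ⊢
      rw [hz, this]
    · rintro _ ⟨x, rfl⟩
      exact ⟨g (f x), rfl⟩
  · intro hr
    obtain ⟨s, hs⟩ := aux_exists_factor (f ∘ₗ g ∘ₗ f) f (le_of_eq hr)
    refine ⟨f ∘ₗ s, ?_, ?_⟩
    · ext w
      have := congrFun (congrArg (DFunLike.coe) hs) w
      simpa using this
    · rintro _ ⟨x, rfl⟩
      exact ⟨s x, rfl⟩

lemma aux_iff2 [FiniteDimensional K V] [FiniteDimensional K W]
    (f : V →ₗ[K] W) (g : W →ₗ[K] V) :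
    LinearMap.range f = LinearMap.range (f ∘ₗ g ∘ₗ f) ↔
      IsCompl (LinearMap.ker f) (LinearMap.range (g ∘ₗ f)) := by
  have hmap : LinearMap.range (f ∘ₗ g ∘ₗ f) =
      Submodule.map f (LinearMap.range (g ∘ₗ f)) := by
    rw [LinearMap.range_comp]
  constructor
  · intro hr
    set p := LinearMap.range (g ∘ₗ f) with hp
    have h1 : Module.finrank K p ≤ Module.finrank K (LinearMap.range f) := by
      rw [hp, LinearMap.range_comp]
      exact Submodule.finrank_map_le g (LinearMap.range f)
    have h2 : Module.finrank K (LinearMap.range f) ≤ Module.finrank K p := by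
      calc Module.finrank K (LinearMap.range f)
          = Module.finrank K (Submodule.map f p) := by rw [hr, hmap]
        _ ≤ Module.finrank K p := Submodule.finrank_map_le f p
    have hrank : Module.finrank K p = Module.finrank K (LinearMap.range f) :=
      le_antisymm h1 h2
    have hker : LinearMap.ker (f.domRestrict p) = ⊥ := by
      have hrange : LinearMap.range (f.domRestrict p) = Submodule.map f p := by
        rw [LinearMap.range_domRestrict]
      have hrn := LinearMap.finrank_range_add_finrank_ker (f.domRestrict p)
      rw [hrange] at hrn
      have hfr : Module.finrank K (Submodule.map f p) = Module.finrank K p := by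
        rw [← hmap, ← hr, hrank]
      rw [hfr] at hrn
      have : Module.finrank K (LinearMap.ker (f.domRestrict p)) = 0 := by omega
      exact Submodule.finrank_eq_zero.mp this
    have hdisj : Disjoint (LinearMap.ker f) p := by
      rw [disjoint_iff_inf_le]
      rintro x ⟨hx1, hx2⟩
      have : (⟨x, hx2⟩ : p) ∈ LinearMap.ker (f.domRestrict p) := by
        simpa [LinearMap.mem_ker] using hx1
      rw [hker] at this
      simpa using this
    have hsup : LinearMap.ker f ⊔ p = ⊤ := by
      apply Submodule.eq_top_of_finrank_eq
      have h3 := Submodule.finrank_sup_add_finrank_inf_eq (LinearMap.ker f) p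
      rw [hdisj.eq_bot, finrank_bot] at h3
      have h4 := LinearMap.finrank_range_add_finrank_ker f
      omega
    exact ⟨hdisj, codisjoint_iff.mpr hsup⟩
  · intro hc
    rw [hmap]
    have htop : LinearMap.ker f ⊔ LinearMap.range (g ∘ₗ f) = ⊤ := hc.sup_eq_top
    have hbot : Submodule.map f (LinearMap.ker f) = ⊥ := by
      rw [Submodule.eq_bot_iff]
      rintro _ ⟨x, hx, rfl⟩
      exact hx
    calc LinearMap.range f = Submodule.map f ⊤ := (LinearMap.range_eq_map f)
      _ = Submodule.map f (LinearMap.ker f ⊔ LinearMap.range (g ∘ₗ f)) := by rw [htop]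
      _ = Submodule.map f (LinearMap.ker f) ⊔
            Submodule.map f (LinearMap.range (g ∘ₗ f)) := Submodule.map_sup _ _ _
      _ = Submodule.map f (LinearMap.range (g ∘ₗ f)) := by rw [hbot, bot_sup_eq]

end Aux

theorem stmt7 (n m : ℕ) (A : Matrix (Fin n) (Fin m) ℂ) (D : Matrix (Fin m) (Fin n) ℂ) :
    ((∃ B : Matrix (Fin m) (Fin n) ℂ, D * A * B = D ∧
        LinearMap.range B.mulVecLin ≤ LinearMap.range D.mulVecLin) ↔
      LinearMap.range D.mulVecLin = LinearMap.range (D * A * D).mulVecLin) ∧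
    ((∃ B : Matrix (Fin m) (Fin n) ℂ, D * A * B = D ∧
        LinearMap.range B.mulVecLin ≤ LinearMap.range D.mulVecLin) ↔
      IsCompl (LinearMap.ker D.mulVecLin) (LinearMap.range (A * D).mulVecLin)) := by
  set f := D.mulVecLin
  set g := A.mulVecLin
  have hexists : (∃ B : Matrix (Fin m) (Fin n) ℂ, D * A * B = D ∧
      LinearMap.range B.mulVecLin ≤ LinearMap.range D.mulVecLin) ↔
      (∃ h : (Fin n → ℂ) →ₗ[ℂ] (Fin m → ℂ),
        f ∘ₗ g ∘ₗ h = f ∧ LinearMap.range h ≤ LinearMap.range f) := by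
    constructor
    · rintro ⟨B, hB, hBr⟩
      refine ⟨B.mulVecLin, ?_, hBr⟩
      have := congrArg Matrix.mulVecLin hB
      rwa [mulVecLin_mul, mulVecLin_mul, LinearMap.comp_assoc] at this
    · rintro ⟨h, hfgh, hr⟩
      have hB : (LinearMap.toMatrix' h).mulVecLin = h := Matrix.toLin'_toMatrix' h
      refine ⟨LinearMap.toMatrix' h, ?_, ?_⟩
      · apply Matrix.toLin'.injective
        show (D * A * LinearMap.toMatrix' h).mulVecLin = D.mulVecLin
        rw [mulVecLin_mul, mulVecLin_mul, LinearMap.comp_assoc, hB]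
        exact hfgh
      · rw [hB]
        exact hr
  have h1 : LinearMap.range (D * A * D).mulVecLin = LinearMap.range (f ∘ₗ g ∘ₗ f) := by
    rw [mulVecLin_mul, mulVecLin_mul, LinearMap.comp_assoc]
  have h2 : LinearMap.range (A * D).mulVecLin = LinearMap.range (g ∘ₗ f) := by
    rw [mulVecLin_mul]
  constructor
  · rw [hexists, h1]
    exact aux_iff1 f g
  · rw [hexists, h2]
    exact (aux_iff1 f g).trans (aux_iff2 f g)
end

section
/- Let A ∈ C^{n×m} and D ∈ C^{m×n}. Then A is right invertible along D if and only if the square matrix AD ∈ C^{n×n} is group invertible and dim ker(D) = dim ker(AD). -/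
open Matrix

section helpers

variable {V W U : Type*} [AddCommGroup V] [Module ℂ V] [AddCommGroup W] [Module ℂ W]
  [AddCommGroup U] [Module ℂ U]

lemma aux_factor_right (f : V →ₗ[ℂ] W) (g : U →ₗ[ℂ] W)
    (h : LinearMap.range g ≤ LinearMap.range f) : ∃ c : U →ₗ[ℂ] V, f ∘ₗ c = g := by
  obtain ⟨r, hr⟩ := f.rangeRestrict.exists_rightInverse_of_surjective
    (LinearMap.range_rangeRestrict f)
  refine ⟨r ∘ₗ g.codRestrict (LinearMap.range f) (fun x => h ⟨x, rfl⟩), ?_⟩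
  ext x
  have hz := LinearMap.ext_iff.mp hr (g.codRestrict (LinearMap.range f) (fun x => h ⟨x, rfl⟩) x)
  have : f (r (g.codRestrict (LinearMap.range f) (fun x => h ⟨x, rfl⟩) x)) = g x := by
    have := congrArg Subtype.val hz
    simpa using this
  simpa using this

lemma aux_factor_left (f : V →ₗ[ℂ] W) (g : V →ₗ[ℂ] U)
    (h : LinearMap.ker f ≤ LinearMap.ker g) : ∃ v : W →ₗ[ℂ] U, v ∘ₗ f = g := by
  let g₀ : LinearMap.range f →ₗ[ℂ] U :=
    ((LinearMap.ker f).liftQ g h) ∘ₗ (f.quotKerEquivRange.symm : LinearMap.range f →ₗ[ℂ] _)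
  obtain ⟨v, hv⟩ := LinearMap.exists_extend g₀
  refine ⟨v, ?_⟩
  ext x
  have h1 : f x = (LinearMap.range f).subtype ⟨f x, LinearMap.mem_range_self f x⟩ := rfl
  have h2 := LinearMap.ext_iff.mp hv ⟨f x, LinearMap.mem_range_self f x⟩
  simp only [LinearMap.comp_apply] at h2 ⊢
  rw [h1, h2]
  show ((LinearMap.ker f).liftQ g h) (f.quotKerEquivRange.symm ⟨f x, _⟩) = g x
  rw [LinearMap.quotKerEquivRange_symm_apply_image]
  simp

end helpers

theorem stmt9 (n m : ℕ) (A : Matrix (Fin n) (Fin m) ℂ) (D : Matrix (Fin m) (Fin n) ℂ) :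
    (∃ B : Matrix (Fin m) (Fin n) ℂ, D * A * B = D ∧
      LinearMap.range B.mulVecLin ≤ LinearMap.range D.mulVecLin) ↔
    ((∃ X : Matrix (Fin n) (Fin n) ℂ,
        (A * D) * X * (A * D) = A * D ∧ X * (A * D) * X = X ∧ (A * D) * X = X * (A * D)) ∧
      Module.finrank ℂ (LinearMap.ker D.mulVecLin) =
        Module.finrank ℂ (LinearMap.ker (A * D).mulVecLin)) := by
  set a := A.mulVecLin with ha
  set d := D.mulVecLin with hd
  set M := (A * D).mulVecLin with hM
  have hMad : ∀ w, a (d w) = M w := fun w =>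
    (DFunLike.congr_fun (Matrix.mulVecLin_mul A D) w).symm
  constructor
  · rintro ⟨B, hB, hrange⟩
    set b := B.mulVecLin with hb
    have hB' : (d ∘ₗ a) ∘ₗ b = d := by
      have := congrArg Matrix.mulVecLin hB
      rwa [Matrix.mulVecLin_mul, Matrix.mulVecLin_mul] at this
    have hB'' : ∀ w, d (a (b w)) = d w := fun w => DFunLike.congr_fun hB' w
    obtain ⟨c, hc⟩ := aux_factor_right d b hrange
    have hcw : ∀ w, d (c w) = b w := fun w => DFunLike.congr_fun hc w
    -- ranks
    have t1 := LinearMap.finrank_range_add_finrank_ker d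
    have t2 := LinearMap.finrank_range_add_finrank_ker M
    have le1 : Module.finrank ℂ (LinearMap.range M) ≤ Module.finrank ℂ (LinearMap.range d) := by
      have : LinearMap.range M = Submodule.map a (LinearMap.range d) := by
        rw [hM, Matrix.mulVecLin_mul, LinearMap.range_comp]
      rw [this]
      exact Submodule.finrank_map_le a _
    have le2 : Module.finrank ℂ (LinearMap.range d) ≤ Module.finrank ℂ (LinearMap.range M) := by
      have e1 : LinearMap.range d = Submodule.map d (LinearMap.range (a ∘ₗ b)) := by
        conv_lhs => rw [← hB', LinearMap.comp_assoc]
        rw [LinearMap.range_comp]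
      have e2 : LinearMap.range (a ∘ₗ b) ≤ LinearMap.range M := by
        rw [LinearMap.range_comp, hM, Matrix.mulVecLin_mul, LinearMap.range_comp]
        exact Submodule.map_mono hrange
      calc Module.finrank ℂ (LinearMap.range d)
          ≤ Module.finrank ℂ (LinearMap.range (a ∘ₗ b)) := by
            rw [e1]; exact Submodule.finrank_map_le d _
        _ ≤ Module.finrank ℂ (LinearMap.range M) := Submodule.finrank_mono e2
    have hkerrank : Module.finrank ℂ (LinearMap.ker d) = Module.finrank ℂ (LinearMap.ker M) := by
      have := le_antisymm le2 le1
      omega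
    -- group inverse construction
    have hU : M ∘ₗ (M ∘ₗ c) = M := by
      refine LinearMap.ext fun w => ?_
      simp only [LinearMap.comp_apply]
      rw [← hMad (c w), hcw, ← hMad w, ← hMad (a (b w))]
      exact congrArg a (hB'' w)
    have hUw : ∀ w, M (M (c w)) = M w := fun w => DFunLike.congr_fun hU w
    have hrange2 : LinearMap.range (M ∘ₗ M) = LinearMap.range M := by
      refine le_antisymm (LinearMap.range_comp_le_range M M) ?_
      have : LinearMap.range M = LinearMap.range ((M ∘ₗ M) ∘ₗ c) := by
        rw [LinearMap.comp_assoc, hU]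
      rw [this]
      exact LinearMap.range_comp_le_range c (M ∘ₗ M)
    have hker2 : LinearMap.ker (M ∘ₗ M) = LinearMap.ker M := by
      have t3 := LinearMap.finrank_range_add_finrank_ker (M ∘ₗ M)
      rw [hrange2] at t3
      refine (Submodule.eq_of_le_of_finrank_eq ?_ ?_).symm
      · intro w hw
        simp only [LinearMap.mem_ker] at hw ⊢
        simp [LinearMap.comp_apply, hw]
      · omega
    obtain ⟨v, hv⟩ := aux_factor_left (M ∘ₗ M) M (le_of_eq hker2)
    have hVw : ∀ w, v (M (M w)) = M w := fun w => DFunLike.congr_fun hv w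
    -- derived identities
    have mvm : ∀ w, M (v (M w)) = M w := by
      intro w
      conv_lhs => rw [← hUw w]
      rw [hVw, hUw]
    have mcm : ∀ w, M (c (M w)) = M w := by
      intro w
      conv_lhs => rw [← hVw (c (M w))]
      rw [hUw, hVw]
    have mc_vm : ∀ w, M (c w) = v (M w) := by
      intro w
      conv_lhs => rw [← hVw (c w)]
      rw [hUw]
    have hXm : (LinearMap.toMatrix' (v ∘ₗ M ∘ₗ c)).mulVecLin = v ∘ₗ M ∘ₗ c :=
      Matrix.toLin'_toMatrix' _
    refine ⟨⟨LinearMap.toMatrix' (v ∘ₗ M ∘ₗ c), ?_, ?_, ?_⟩, hkerrank⟩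
    · apply Matrix.toLin'.injective
      rw [Matrix.toLin'_apply', Matrix.toLin'_apply']
      simp only [Matrix.mulVecLin_mul, hXm, ← ha, ← hd, ← hM]
      refine LinearMap.ext fun w => ?_
      simp only [LinearMap.comp_apply]
      rw [mcm, mvm]
    · apply Matrix.toLin'.injective
      rw [Matrix.toLin'_apply', Matrix.toLin'_apply']
      simp only [Matrix.mulVecLin_mul, hXm, ← ha, ← hd, ← hM]
      refine LinearMap.ext fun w => ?_
      simp only [LinearMap.comp_apply]
      rw [mcm, mvm]
    · apply Matrix.toLin'.injective
      rw [Matrix.toLin'_apply', Matrix.toLin'_apply']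
      simp only [Matrix.mulVecLin_mul, hXm, ← ha, ← hd, ← hM]
      refine LinearMap.ext fun w => ?_
      simp only [LinearMap.comp_apply]
      rw [mvm, mcm, mc_vm]
  · rintro ⟨⟨X, h1, h2, h3⟩, hrk⟩
    set x := X.mulVecLin with hx
    have h1w : ∀ w, M (x (M w)) = M w := by
      intro w
      have e := DFunLike.congr_fun (congrArg Matrix.mulVecLin h1) w
      simp only [Matrix.mulVecLin_mul, LinearMap.comp_apply, ← ha, ← hd, ← hx, ← hM] at e
      simpa only [hMad] using e
    have h3w : ∀ w, M (x w) = x (M w) := by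
      intro w
      have e := DFunLike.congr_fun (congrArg Matrix.mulVecLin h3) w
      simp only [Matrix.mulVecLin_mul, LinearMap.comp_apply, ← ha, ← hd, ← hx, ← hM] at e
      simpa only [hMad] using e
    have hkerle : LinearMap.ker d ≤ LinearMap.ker M := by
      intro w hw
      simp only [LinearMap.mem_ker] at hw ⊢
      rw [← hMad, hw, map_zero]
    have hkereq : LinearMap.ker d = LinearMap.ker M :=
      Submodule.eq_of_le_of_finrank_eq hkerle hrk
    refine ⟨D * X, ?_, ?_⟩
    · apply Matrix.toLin'.injective
      rw [Matrix.toLin'_apply', Matrix.toLin'_apply']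
      simp only [Matrix.mulVecLin_mul, ← ha, ← hd, ← hx, ← hM]
      refine LinearMap.ext fun w => ?_
      simp only [LinearMap.comp_apply]
      rw [hMad]
      have key : w - M (x w) ∈ LinearMap.ker M := by
        simp only [LinearMap.mem_ker, map_sub]
        rw [h3w, h1w, sub_self]
      rw [← hkereq] at key
      simp only [LinearMap.mem_ker, map_sub, sub_eq_zero] at key
      exact key.symm
    · rw [Matrix.mulVecLin_mul]
      exact LinearMap.range_comp_le_range _ _
end

section
/- Let D, E ∈ C^{m×n}. There exists a matrix A ∈ C^{n×m} that is left (D,E)-invertible if and only if rank(D) ≤ rank(E). -/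
/-!
If `C A D = D` then `rank D ≤ rank C`, and `ker E ≤ ker C` forces `rank C ≤ rank E` by
rank–nullity. Conversely, when `rank D ≤ rank E`, embed `range D` into `range E` and take a left
inverse `F` of this embedding, so that `range D ≤ range (F E)`; then `C = F E` kills `ker E`, and
any inner inverse `A` of `C` (`C A C = C`) satisfies `C A D = D`.
-/

namespace LinearMap

open Module

variable {K V W U : Type*} [Field K] [AddCommGroup V] [Module K V] [AddCommGroup W] [Module K W]
  [AddCommGroup U] [Module K U]

theorem finrank_range_le_of_ker_le [FiniteDimensional K V] {f : V →ₗ[K] W} {g : V →ₗ[K] U}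
    (h : ker f ≤ ker g) : finrank K (range g) ≤ finrank K (range f) := by
  have hf := f.finrank_range_add_finrank_ker
  have hg := g.finrank_range_add_finrank_ker
  have := Submodule.finrank_mono h
  omega

theorem exists_comp_comp_self_eq (g : V →ₗ[K] W) : ∃ a : W →ₗ[K] V, g ∘ₗ a ∘ₗ g = g := by
  obtain ⟨s, hs⟩ := g.rangeRestrict.exists_rightInverse_of_surjective g.range_rangeRestrict
  obtain ⟨p, hp⟩ := (range g).subtype.exists_leftInverse_of_injective (range g).ker_subtype
  refine ⟨s ∘ₗ p, ?_⟩
  calc g ∘ₗ s ∘ₗ p ∘ₗ g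
      = (range g).subtype ∘ₗ (g.rangeRestrict ∘ₗ s) ∘ₗ (p ∘ₗ (range g).subtype) ∘ₗ g.rangeRestrict :=
        rfl
    _ = g := by rw [hs, hp]; rfl

theorem exists_comp_comp_eq_of_range_le {d : U →ₗ[K] W} {g : V →ₗ[K] W} (h : range d ≤ range g) :
    ∃ a : W →ₗ[K] V, g ∘ₗ a ∘ₗ d = d := by
  obtain ⟨a, ha⟩ := g.exists_comp_comp_self_eq
  refine ⟨a, LinearMap.ext fun x => ?_⟩
  obtain ⟨y, hy⟩ := h (mem_range_self d x)
  simpa [← hy] using congr($ha y)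

theorem exists_range_le_range_comp [FiniteDimensional K W] {d : U →ₗ[K] W} {e : V →ₗ[K] W}
    (h : finrank K (range d) ≤ finrank K (range e)) :
    ∃ f : W →ₗ[K] W, range d ≤ range (f ∘ₗ e) := by
  obtain ⟨i, hi⟩ := finrank_le_iff_exists_linearMap.mp h
  obtain ⟨r, hr⟩ := ((range e).subtype ∘ₗ i).exists_leftInverse_of_injective
    (ker_eq_bot.mpr ((range e).injective_subtype.comp hi))
  refine ⟨(range d).subtype ∘ₗ r, fun y hy => ?_⟩
  obtain ⟨x, hx⟩ := (i ⟨y, hy⟩).2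
  exact ⟨x, by simpa [hx] using congr(((range d).subtype ∘ₗ $hr) ⟨y, hy⟩)⟩

theorem exists_comp_comp_eq_and_ker_le_iff [FiniteDimensional K V] [FiniteDimensional K W]
    (d e : V →ₗ[K] W) :
    (∃ a : W →ₗ[K] V, ∃ c : V →ₗ[K] W, c ∘ₗ a ∘ₗ d = d ∧ ker e ≤ ker c) ↔
      finrank K (range d) ≤ finrank K (range e) := by
  constructor
  · rintro ⟨a, c, hd, hker⟩
    calc finrank K (range d) = finrank K (range (c ∘ₗ a ∘ₗ d)) := by rw [hd]
      _ ≤ finrank K (range c) := Submodule.finrank_mono (range_comp_le_range _ _)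
      _ ≤ finrank K (range e) := finrank_range_le_of_ker_le hker
  · intro h
    obtain ⟨f, hf⟩ := exists_range_le_range_comp h
    obtain ⟨a, ha⟩ := exists_comp_comp_eq_of_range_le hf
    exact ⟨a, f ∘ₗ e, ha, ker_le_ker_comp e f⟩

end LinearMap

open Matrix

theorem stmt10 (n m : ℕ) (D E : Matrix (Fin m) (Fin n) ℂ) :
    (∃ A : Matrix (Fin n) (Fin m) ℂ, ∃ C : Matrix (Fin m) (Fin n) ℂ,
      C * A * D = D ∧ LinearMap.ker E.mulVecLin ≤ LinearMap.ker C.mulVecLin) ↔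
    D.rank ≤ E.rank := by
  rw [Matrix.rank, Matrix.rank, ← LinearMap.exists_comp_comp_eq_and_ker_le_iff]
  refine toLin'.toEquiv.exists_congr fun A => toLin'.toEquiv.exists_congr fun C => ?_
  rw [← toLin'.injective.eq_iff, toLin'_mul, toLin'_mul, LinearMap.comp_assoc]
  simp only [LinearEquiv.coe_toEquiv, toLin'_apply']
end

section
/- Let D, E ∈ C^{m×n}. There exists a matrix A ∈ C^{n×m} that is right (D,E)-invertible if and only if rank(E) ≤ rank(D). -/
/-!
If `E A B = E` then `rank E ≤ rank B ≤ rank D`. Conversely, when `rank E ≤ rank D` there is an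
injection `j` of `range E` into `range D`; take `B = j ∘ E`, and let `A` first undo `j` by a left
inverse and then lift back along `E` by a right inverse of `E` onto its range.
-/

namespace LinearMap

variable {K V W : Type*} [DivisionRing K] [AddCommGroup V] [Module K V] [AddCommGroup W]
  [Module K W]

theorem rank_le_of_comp_comp_eq_self {e d : V →ₗ[K] W} {a : W →ₗ[K] V} {b : V →ₗ[K] W}
    (hab : e ∘ₗ a ∘ₗ b = e) (hb : range b ≤ range d) : e.rank ≤ d.rank :=
  calc e.rank = ((e ∘ₗ a) ∘ₗ b).rank := by rw [comp_assoc, hab]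
    _ ≤ b.rank := rank_comp_le_right b (e ∘ₗ a)
    _ ≤ d.rank := Submodule.rank_mono hb

theorem exists_comp_comp_eq_self_of_rank_le {e d : V →ₗ[K] W} (h : e.rank ≤ d.rank) :
    ∃ a : W →ₗ[K] V, ∃ b : V →ₗ[K] W, e ∘ₗ a ∘ₗ b = e ∧ range b ≤ range d := by
  obtain ⟨j, hj⟩ := rank_le_iff_exists_linearMap.mp h
  let i := (range d).subtype ∘ₗ j
  obtain ⟨p, hp⟩ := i.exists_leftInverse_of_injective
    (ker_eq_bot.mpr ((range d).injective_subtype.comp hj))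
  obtain ⟨s, hs⟩ := e.rangeRestrict.exists_rightInverse_of_surjective (range_rangeRestrict e)
  have hpi (y : range e) : p (i y) = y := LinearMap.congr_fun hp y
  have hes (y : range e) : e (s y) = y := congr(Subtype.val $(LinearMap.congr_fun hs y))
  refine ⟨s ∘ₗ p, i ∘ₗ e.rangeRestrict, ?_, ?_⟩
  · ext x
    simp only [comp_apply, hpi, hes, rangeRestrict, codRestrict_apply]
  · exact (range_comp_le_range _ _).trans
      ((range_comp_le_range _ _).trans (Submodule.range_subtype _).le)

theorem exists_comp_comp_eq_self_and_range_le_iff (e d : V →ₗ[K] W) :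
    (∃ a : W →ₗ[K] V, ∃ b : V →ₗ[K] W, e ∘ₗ a ∘ₗ b = e ∧ range b ≤ range d) ↔
      e.rank ≤ d.rank :=
  ⟨fun ⟨_, _, hab, hb⟩ ↦ rank_le_of_comp_comp_eq_self hab hb, exists_comp_comp_eq_self_of_rank_le⟩

end LinearMap

theorem Matrix.exists_mul_mul_eq_self_and_range_le_iff {K m n : Type*} [Field K] [Fintype m]
    [Fintype n] (D E : Matrix m n K) :
    (∃ A : Matrix n m K, ∃ B : Matrix m n K,
      E * A * B = E ∧ LinearMap.range B.mulVecLin ≤ LinearMap.range D.mulVecLin) ↔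
      E.rank ≤ D.rank := by
  classical
  have hrank : E.rank ≤ D.rank ↔ E.mulVecLin.rank ≤ D.mulVecLin.rank := by
    simp only [Matrix.rank, LinearMap.rank, ← Module.finrank_eq_rank, Nat.cast_le]
  rw [hrank, ← LinearMap.exists_comp_comp_eq_self_and_range_le_iff]
  simp only [Matrix.toLin'.surjective.exists, ← Matrix.toLin'_apply', ← Matrix.toLin'_mul,
    ← Matrix.mul_assoc, Matrix.toLin'.injective.eq_iff]

theorem stmt11 (n m : ℕ) (D E : Matrix (Fin m) (Fin n) ℂ) :
    (∃ A : Matrix (Fin n) (Fin m) ℂ, ∃ B : Matrix (Fin m) (Fin n) ℂ,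
      E * A * B = E ∧ LinearMap.range B.mulVecLin ≤ LinearMap.range D.mulVecLin) ↔
    E.rank ≤ D.rank :=
  Matrix.exists_mul_mul_eq_self_and_range_le_iff D E
end

section
/- Let A ∈ C^{n×m} and D, E ∈ C^{m×n}. If A is right (D,E)-invertible, then the set of all right (D,E)-inverses of A equals { D[(EAD)† E + (I_n − (EAD)† E A D) Z] : Z ∈ C^{n×n} }, where (·)† denotes the Moore-Penrose inverse. -/
open Matrix

lemma range_le_iff_exists (m n p : ℕ) (B : Matrix (Fin m) (Fin n) ℂ)
    (D : Matrix (Fin m) (Fin p) ℂ) :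
    LinearMap.range B.mulVecLin ≤ LinearMap.range D.mulVecLin ↔
      ∃ C : Matrix (Fin p) (Fin n) ℂ, B = D * C := by
  constructor
  · intro hle
    have hc : ∀ j : Fin n, ∃ c : Fin p → ℂ, D *ᵥ c = B *ᵥ Pi.single j 1 := by
      intro j
      have : B.mulVecLin (Pi.single j 1) ∈ LinearMap.range D.mulVecLin :=
        hle ⟨Pi.single j 1, rfl⟩
      obtain ⟨c, hc⟩ := this
      exact ⟨c, hc⟩
    choose c hcspec using hc
    refine ⟨Matrix.of (fun i j => c j i), ?_⟩
    ext i j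
    have := congrFun (hcspec j) i
    simp only [mulVec, dotProduct] at this
    simp only [Matrix.mul_apply, Matrix.of_apply]
    rw [this]
    simp [Pi.single_apply, mul_ite, Finset.sum_ite_eq']
  · rintro ⟨C, rfl⟩
    rintro x ⟨v, rfl⟩
    exact ⟨C *ᵥ v, by simp [mulVec_mulVec]⟩

theorem stmt12 (n m : ℕ) (A : Matrix (Fin n) (Fin m) ℂ) (D E : Matrix (Fin m) (Fin n) ℂ)
    (P : Matrix (Fin n) (Fin m) ℂ)
    (hP1 : (E * A * D) * P * (E * A * D) = E * A * D)
    (hP2 : P * (E * A * D) * P = P)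
    (hP3 : ((E * A * D) * P)ᴴ = (E * A * D) * P)
    (hP4 : (P * (E * A * D))ᴴ = P * (E * A * D))
    (h : ∃ B : Matrix (Fin m) (Fin n) ℂ, E * A * B = E ∧
      LinearMap.range B.mulVecLin ≤ LinearMap.range D.mulVecLin) :
    {B : Matrix (Fin m) (Fin n) ℂ | E * A * B = E ∧
      LinearMap.range B.mulVecLin ≤ LinearMap.range D.mulVecLin} =
    {B : Matrix (Fin m) (Fin n) ℂ | ∃ Z : Matrix (Fin n) (Fin n) ℂ,
      B = D * (P * E + (1 - P * (E * A * D)) * Z)} := by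
  obtain ⟨B0, hB0e, hB0r⟩ := h
  obtain ⟨C0, rfl⟩ := (range_le_iff_exists m n n B0 D).mp hB0r
  rw [← Matrix.mul_assoc] at hB0e
  have key : E * A * D * (P * E) = E := by
    have k1 : E * A * D * (P * E) = E * A * D * P * E := (Matrix.mul_assoc _ _ _).symm
    have k2 : E * A * D * P * E = E * A * D * P * (E * A * D * C0) := by rw [hB0e]
    have k3 : E * A * D * P * (E * A * D * C0) = E * A * D * P * (E * A * D) * C0 :=
      (Matrix.mul_assoc _ _ _).symm
    rw [k1, k2, k3, hP1, hB0e]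
  ext B
  simp only [Set.mem_setOf_eq]
  constructor
  · rintro ⟨he, hr⟩
    obtain ⟨C, rfl⟩ := (range_le_iff_exists m n n B D).mp hr
    rw [← Matrix.mul_assoc] at he
    refine ⟨C, ?_⟩
    have h1 : P * (E * A * D) * C = P * E := by rw [Matrix.mul_assoc, he]
    rw [Matrix.mul_add, Matrix.sub_mul, Matrix.one_mul, h1, Matrix.mul_sub, add_sub_cancel]
  · rintro ⟨Z, rfl⟩
    refine ⟨?_, (range_le_iff_exists m n n _ D).mpr ⟨_, rfl⟩⟩
    rw [← Matrix.mul_assoc, Matrix.mul_add, key, ← Matrix.mul_assoc, Matrix.mul_sub,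
      Matrix.mul_one, ← Matrix.mul_assoc, hP1, sub_self, Matrix.zero_mul, add_zero]
end

section
/- Let A ∈ C^{n×m} and D, E ∈ C^{m×n}. The following are equivalent: (i) A has a unique left (D,E)-inverse; (ii) A has a unique right (D,E)-inverse; (iii) rank(D) = rank(E) = rank(EAD). Moreover, in this case the unique left and the unique right (D,E)-inverse both equal D(EAD)† E. -/
open Matrix

private lemma mvl_inj {a b : ℕ} {X Y : Matrix (Fin a) (Fin b) ℂ}
    (h : X.mulVecLin = Y.mulVecLin) : X = Y := by
  have : Matrix.toLin' X = Matrix.toLin' Y := by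
    rw [Matrix.toLin'_apply', Matrix.toLin'_apply', h]
  exact Matrix.toLin'.injective this

private lemma exists_functional {a : ℕ} {p : Submodule ℂ (Fin a → ℂ)} {y : Fin a → ℂ}
    (hy : y ∉ p) :
    ∃ φ : (Fin a → ℂ) →ₗ[ℂ] ℂ, (∀ x ∈ p, φ x = 0) ∧ φ y ≠ 0 := by
  have h0 : p.mkQ y ≠ 0 := by
    simpa [Submodule.Quotient.mk_eq_zero] using hy
  have := (Module.forall_dual_apply_eq_zero_iff ℂ (p.mkQ y)).not
  rw [not_forall] at this
  obtain ⟨g, hg⟩ := this.mpr h0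
  exact ⟨g ∘ₗ p.mkQ, fun x hx => by
    simp [(Submodule.Quotient.mk_eq_zero p).mpr hx], hg⟩

private lemma rank_eq_of_ker_eq {a b c : ℕ} {X : Matrix (Fin a) (Fin b) ℂ}
    {Y : Matrix (Fin c) (Fin b) ℂ}
    (h : LinearMap.ker X.mulVecLin = LinearMap.ker Y.mulVecLin) : X.rank = Y.rank := by
  have h1 := LinearMap.finrank_range_add_finrank_ker X.mulVecLin
  have h2 := LinearMap.finrank_range_add_finrank_ker Y.mulVecLin
  rw [h] at h1
  simp only [Module.finrank_pi] at h1 h2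
  unfold Matrix.rank
  omega

private lemma ker_eq_of_rank_eq {a b c : ℕ} {X : Matrix (Fin a) (Fin b) ℂ}
    {Y : Matrix (Fin c) (Fin b) ℂ}
    (hle : LinearMap.ker X.mulVecLin ≤ LinearMap.ker Y.mulVecLin)
    (h : X.rank = Y.rank) : LinearMap.ker X.mulVecLin = LinearMap.ker Y.mulVecLin := by
  apply Submodule.eq_of_le_of_finrank_eq hle
  have h1 := LinearMap.finrank_range_add_finrank_ker X.mulVecLin
  have h2 := LinearMap.finrank_range_add_finrank_ker Y.mulVecLin
  unfold Matrix.rank at h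
  simp only [Module.finrank_pi] at h1 h2
  omega

private lemma range_eq_of_rank_eq {a b c : ℕ} {X : Matrix (Fin a) (Fin b) ℂ}
    {Y : Matrix (Fin a) (Fin c) ℂ}
    (hle : LinearMap.range X.mulVecLin ≤ LinearMap.range Y.mulVecLin)
    (h : X.rank = Y.rank) : LinearMap.range X.mulVecLin = LinearMap.range Y.mulVecLin :=
  Submodule.eq_of_le_of_finrank_eq hle h

theorem stmt13 (n m : ℕ) (A : Matrix (Fin n) (Fin m) ℂ) (D E : Matrix (Fin m) (Fin n) ℂ)
    (P : Matrix (Fin n) (Fin m) ℂ)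
    (hP1 : (E * A * D) * P * (E * A * D) = E * A * D)
    (hP2 : P * (E * A * D) * P = P)
    (hP3 : ((E * A * D) * P)ᴴ = (E * A * D) * P)
    (hP4 : (P * (E * A * D))ᴴ = P * (E * A * D)) :
    ((∃! C : Matrix (Fin m) (Fin n) ℂ, C * A * D = D ∧
        LinearMap.ker E.mulVecLin ≤ LinearMap.ker C.mulVecLin) ↔
      (∃! B : Matrix (Fin m) (Fin n) ℂ, E * A * B = E ∧
        LinearMap.range B.mulVecLin ≤ LinearMap.range D.mulVecLin)) ∧
    ((∃! C : Matrix (Fin m) (Fin n) ℂ, C * A * D = D ∧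
        LinearMap.ker E.mulVecLin ≤ LinearMap.ker C.mulVecLin) ↔
      (D.rank = E.rank ∧ E.rank = (E * A * D).rank)) ∧
    ((∃! C : Matrix (Fin m) (Fin n) ℂ, C * A * D = D ∧
        LinearMap.ker E.mulVecLin ≤ LinearMap.ker C.mulVecLin) →
      (((D * P * E) * A * D = D ∧
          LinearMap.ker E.mulVecLin ≤ LinearMap.ker (D * P * E).mulVecLin) ∧
        (E * A * (D * P * E) = E ∧
          LinearMap.range (D * P * E).mulVecLin ≤ LinearMap.range D.mulVecLin))) := by
  set M := E * A * D with hMdef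
  -- basic inclusions
  have hkerDM : LinearMap.ker D.mulVecLin ≤ LinearMap.ker M.mulVecLin := by
    rw [hMdef, Matrix.mulVecLin_mul]
    exact LinearMap.ker_le_ker_comp _ _
  have hranME : LinearMap.range M.mulVecLin ≤ LinearMap.range E.mulVecLin := by
    rw [hMdef, Matrix.mul_assoc, Matrix.mulVecLin_mul]
    exact LinearMap.range_comp_le_range _ _
  have hEADcomp : ∀ v, E.mulVecLin (A.mulVecLin (D.mulVecLin v)) = M.mulVecLin v := by
    intro v
    rw [hMdef]
    simp [Matrix.mulVecLin_mul]
  -- the candidate is a left inverse (given rank conditions)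
  have hexL : D.rank = M.rank → E.rank = M.rank →
      ((D * P * E) * A * D = D ∧
        LinearMap.ker E.mulVecLin ≤ LinearMap.ker (D * P * E).mulVecLin) := by
    intro hD hE
    have hker : LinearMap.ker D.mulVecLin = LinearMap.ker M.mulVecLin :=
      ker_eq_of_rank_eq hkerDM hD
    constructor
    · have e1 : (D * P * E) * A * D = D * (P * M) := by
        rw [hMdef]; simp only [Matrix.mul_assoc]
      rw [e1]
      apply mvl_inj
      apply LinearMap.ext; intro v
      simp only [Matrix.mulVecLin_mul, LinearMap.comp_apply]
      have hv : v - P.mulVecLin (M.mulVecLin v) ∈ LinearMap.ker M.mulVecLin := by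
        simp only [LinearMap.mem_ker, map_sub]
        have h1 : (M * P * M).mulVecLin v = M.mulVecLin v := by rw [hP1]
        simp only [Matrix.mulVecLin_mul, LinearMap.comp_apply] at h1
        rw [h1, sub_self]
      rw [← hker] at hv
      simp only [LinearMap.mem_ker, map_sub, sub_eq_zero] at hv
      exact hv.symm
    · rw [Matrix.mulVecLin_mul]
      exact LinearMap.ker_le_ker_comp _ _
  -- the candidate is a right inverse (given rank conditions)
  have hexR : D.rank = M.rank → E.rank = M.rank →
      (E * A * (D * P * E) = E ∧
        LinearMap.range (D * P * E).mulVecLin ≤ LinearMap.range D.mulVecLin) := by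
    intro hD hE
    have hrange : LinearMap.range M.mulVecLin = LinearMap.range E.mulVecLin :=
      range_eq_of_rank_eq hranME hE.symm
    constructor
    · have e1 : E * A * (D * P * E) = (M * P) * E := by
        rw [hMdef]; simp only [Matrix.mul_assoc]
      rw [e1]
      apply mvl_inj
      apply LinearMap.ext; intro v
      simp only [Matrix.mulVecLin_mul, LinearMap.comp_apply]
      have : E.mulVecLin v ∈ LinearMap.range M.mulVecLin := by
        rw [hrange]; exact LinearMap.mem_range_self _ v
      obtain ⟨u, hu⟩ := LinearMap.mem_range.mp this
      rw [← hu]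
      have h1 : (M * P * M).mulVecLin u = M.mulVecLin u := by rw [hP1]
      simp only [Matrix.mulVecLin_mul, LinearMap.comp_apply] at h1
      exact h1
    · rw [Matrix.mul_assoc, Matrix.mulVecLin_mul]
      exact LinearMap.range_comp_le_range _ _
  -- left uniqueness (given rank condition on E)
  have huniqL : E.rank = M.rank → ∀ C₁ C₂ : Matrix (Fin m) (Fin n) ℂ,
      (C₁ * A * D = D ∧ LinearMap.ker E.mulVecLin ≤ LinearMap.ker C₁.mulVecLin) →
      (C₂ * A * D = D ∧ LinearMap.ker E.mulVecLin ≤ LinearMap.ker C₂.mulVecLin) →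
      C₁ = C₂ := by
    intro hE C₁ C₂ ⟨h11, h12⟩ ⟨h21, h22⟩
    have hrange : LinearMap.range M.mulVecLin = LinearMap.range E.mulVecLin :=
      range_eq_of_rank_eq hranME hE.symm
    apply mvl_inj
    apply LinearMap.ext; intro v
    have : E.mulVecLin v ∈ LinearMap.range M.mulVecLin := by
      rw [hrange]; exact LinearMap.mem_range_self _ v
    obtain ⟨u, hu⟩ := LinearMap.mem_range.mp this
    have hvu : v - A.mulVecLin (D.mulVecLin u) ∈ LinearMap.ker E.mulVecLin := by
      simp only [LinearMap.mem_ker, map_sub]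
      rw [hEADcomp u, hu, sub_self]
    have k1 := h12 hvu
    have k2 := h22 hvu
    simp only [LinearMap.mem_ker, map_sub, sub_eq_zero] at k1 k2
    have f : ∀ C : Matrix (Fin m) (Fin n) ℂ, C * A * D = D →
        C.mulVecLin (A.mulVecLin (D.mulVecLin u)) = D.mulVecLin u := by
      intro C hC
      have h1 : (C * A * D).mulVecLin u = D.mulVecLin u := by rw [hC]
      simp only [Matrix.mulVecLin_mul, LinearMap.comp_apply] at h1
      exact h1
    rw [k1, k2, f C₁ h11, f C₂ h21]
  -- right uniqueness (given rank condition on D)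
  have huniqR : D.rank = M.rank → ∀ B₁ B₂ : Matrix (Fin m) (Fin n) ℂ,
      (E * A * B₁ = E ∧ LinearMap.range B₁.mulVecLin ≤ LinearMap.range D.mulVecLin) →
      (E * A * B₂ = E ∧ LinearMap.range B₂.mulVecLin ≤ LinearMap.range D.mulVecLin) →
      B₁ = B₂ := by
    intro hD B₁ B₂ ⟨h11, h12⟩ ⟨h21, h22⟩
    have hker : LinearMap.ker D.mulVecLin = LinearMap.ker M.mulVecLin :=
      ker_eq_of_rank_eq hkerDM hD
    apply mvl_inj
    apply LinearMap.ext; intro v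
    obtain ⟨u₁, hu₁⟩ := LinearMap.mem_range.mp (h12 (LinearMap.mem_range_self B₁.mulVecLin v))
    obtain ⟨u₂, hu₂⟩ := LinearMap.mem_range.mp (h22 (LinearMap.mem_range_self B₂.mulVecLin v))
    have f : ∀ (B : Matrix (Fin m) (Fin n) ℂ) (u : Fin n → ℂ), E * A * B = E →
        D.mulVecLin u = B.mulVecLin v → M.mulVecLin u = E.mulVecLin v := by
      intro B u hB hDu
      rw [← hEADcomp u, hDu]
      have h1 : (E * A * B).mulVecLin v = E.mulVecLin v := by rw [hB]
      simp only [Matrix.mulVecLin_mul, LinearMap.comp_apply] at h1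
      exact h1
    have e : u₁ - u₂ ∈ LinearMap.ker M.mulVecLin := by
      simp only [LinearMap.mem_ker, map_sub]
      rw [f B₁ u₁ h11 hu₁, f B₂ u₂ h21 hu₂, sub_self]
    rw [← hker] at e
    simp only [LinearMap.mem_ker, map_sub, sub_eq_zero] at e
    rw [← hu₁, ← hu₂, e]
  -- existence of a left inverse gives rank D = rank M
  have hLD : ∀ C : Matrix (Fin m) (Fin n) ℂ,
      (C * A * D = D ∧ LinearMap.ker E.mulVecLin ≤ LinearMap.ker C.mulVecLin) →
      D.rank = M.rank := by
    intro C ⟨hC1, hC2⟩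
    have hMD : LinearMap.ker M.mulVecLin ≤ LinearMap.ker D.mulVecLin := by
      intro v hv
      simp only [LinearMap.mem_ker] at hv ⊢
      have hADv : A.mulVecLin (D.mulVecLin v) ∈ LinearMap.ker E.mulVecLin := by
        simp only [LinearMap.mem_ker]
        rw [hEADcomp v, hv]
      have hC0 := hC2 hADv
      simp only [LinearMap.mem_ker] at hC0
      have h1 : (C * A * D).mulVecLin v = D.mulVecLin v := by rw [hC1]
      simp only [Matrix.mulVecLin_mul, LinearMap.comp_apply] at h1
      rw [← h1, hC0]
    exact rank_eq_of_ker_eq (le_antisymm hkerDM hMD)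
  -- unique left inverse gives rank E = rank M
  have hLE : (∃! C : Matrix (Fin m) (Fin n) ℂ, C * A * D = D ∧
      LinearMap.ker E.mulVecLin ≤ LinearMap.ker C.mulVecLin) → E.rank = M.rank := by
    rintro ⟨C, ⟨hC1, hC2⟩, huniq⟩
    have hsub : LinearMap.range E.mulVecLin ≤ LinearMap.range M.mulVecLin := by
      intro y hy
      obtain ⟨x₀, hx₀⟩ := LinearMap.mem_range.mp hy
      by_contra hy'
      obtain ⟨φ, hφ0, hφy⟩ := exists_functional hy'
      have hy0 : y ≠ 0 := by
        intro h; exact hy' (h ▸ (LinearMap.range M.mulVecLin).zero_mem)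
      set g := (φ ∘ₗ E.mulVecLin).smulRight y with hgdef
      set Z := LinearMap.toMatrix' g with hZdef
      have hZml : Z.mulVecLin = g := by
        rw [← Matrix.toLin'_apply', hZdef, Matrix.toLin'_toMatrix']
      have hZAD : Z * A * D = 0 := by
        apply mvl_inj
        rw [Matrix.mulVecLin_zero]
        apply LinearMap.ext; intro v
        simp only [Matrix.mulVecLin_mul, LinearMap.comp_apply, hZml, hgdef,
          LinearMap.smulRight_apply, LinearMap.zero_apply]
        rw [hEADcomp v]
        rw [hφ0 _ (LinearMap.mem_range_self _ v), zero_smul]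
      have hnew : (C + Z) * A * D = D ∧
          LinearMap.ker E.mulVecLin ≤ LinearMap.ker (C + Z).mulVecLin := by
        constructor
        · rw [Matrix.add_mul, Matrix.add_mul, hZAD, hC1, add_zero]
        · intro v hv
          simp only [LinearMap.mem_ker] at hv ⊢
          rw [Matrix.mulVecLin_add, LinearMap.add_apply]
          have h1 : C.mulVecLin v = 0 := hC2 hv
          have h2 : Z.mulVecLin v = 0 := by
            rw [hZml, hgdef]
            simp only [LinearMap.smulRight_apply, LinearMap.comp_apply, hv, map_zero, zero_smul]
          rw [h1, h2, add_zero]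
      have hZ0 : Z = 0 := by
        have := (huniq _ hnew).trans (huniq C ⟨hC1, hC2⟩).symm
        rwa [add_eq_left] at this
      have : g x₀ = 0 := by rw [← hZml, hZ0, Matrix.mulVecLin_zero, LinearMap.zero_apply]
      rw [hgdef] at this
      simp only [LinearMap.smulRight_apply, LinearMap.comp_apply, hx₀] at this
      rcases smul_eq_zero.mp this with h | h
      · exact hφy h
      · exact hy0 h
    have hrange : LinearMap.range M.mulVecLin = LinearMap.range E.mulVecLin :=
      le_antisymm hranME hsub
    unfold Matrix.rank
    rw [hrange]
  -- existence of a right inverse gives rank E = rank M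
  have hRE : ∀ B : Matrix (Fin m) (Fin n) ℂ,
      (E * A * B = E ∧ LinearMap.range B.mulVecLin ≤ LinearMap.range D.mulVecLin) →
      E.rank = M.rank := by
    intro B ⟨hB1, hB2⟩
    have hsub : LinearMap.range E.mulVecLin ≤ LinearMap.range M.mulVecLin := by
      intro y hy
      obtain ⟨v, rfl⟩ := LinearMap.mem_range.mp hy
      obtain ⟨u, hu⟩ := LinearMap.mem_range.mp (hB2 (LinearMap.mem_range_self B.mulVecLin v))
      refine LinearMap.mem_range.mpr ⟨u, ?_⟩
      rw [← hEADcomp u, hu]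
      have h1 : (E * A * B).mulVecLin v = E.mulVecLin v := by rw [hB1]
      simp only [Matrix.mulVecLin_mul, LinearMap.comp_apply] at h1
      exact h1
    have hrange : LinearMap.range M.mulVecLin = LinearMap.range E.mulVecLin :=
      le_antisymm hranME hsub
    unfold Matrix.rank
    rw [hrange]
  -- unique right inverse gives rank D = rank M
  have hRD : (∃! B : Matrix (Fin m) (Fin n) ℂ, E * A * B = E ∧
      LinearMap.range B.mulVecLin ≤ LinearMap.range D.mulVecLin) → D.rank = M.rank := by
    rintro ⟨B, ⟨hB1, hB2⟩, huniq⟩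
    have hMkerD : LinearMap.ker M.mulVecLin ≤ LinearMap.ker D.mulVecLin := by
      intro v hv
      simp only [LinearMap.mem_ker] at hv ⊢
      by_contra hDv
      have hvne : v ≠ 0 := by
        intro h; exact hDv (by rw [h, map_zero])
      obtain ⟨j, hj⟩ := Function.ne_iff.mp hvne
      set g := (LinearMap.proj j : (Fin n → ℂ) →ₗ[ℂ] ℂ).smulRight (D.mulVecLin v) with hgdef
      set W := LinearMap.toMatrix' g with hWdef
      have hWml : W.mulVecLin = g := by
        rw [← Matrix.toLin'_apply', hWdef, Matrix.toLin'_toMatrix']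
      have hEAW : E * A * W = 0 := by
        apply mvl_inj
        rw [Matrix.mulVecLin_zero]
        apply LinearMap.ext; intro x
        simp only [Matrix.mulVecLin_mul, LinearMap.comp_apply, hWml, hgdef,
          LinearMap.smulRight_apply, LinearMap.proj_apply, _root_.map_smul, LinearMap.zero_apply]
        rw [hEADcomp v, hv, smul_zero]
      have hnew : E * A * (B + W) = E ∧
          LinearMap.range (B + W).mulVecLin ≤ LinearMap.range D.mulVecLin := by
        constructor
        · rw [Matrix.mul_add, hEAW, hB1, add_zero]
        · intro y hy
          obtain ⟨x, rfl⟩ := LinearMap.mem_range.mp hy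
          obtain ⟨u, hu⟩ := LinearMap.mem_range.mp (hB2 (LinearMap.mem_range_self B.mulVecLin x))
          refine LinearMap.mem_range.mpr ⟨u + x j • v, ?_⟩
          have hWx : W.mulVecLin x = x j • D.mulVecLin v := by
            rw [hWml, hgdef]
            simp only [LinearMap.smulRight_apply, LinearMap.proj_apply]
          rw [Matrix.mulVecLin_add, LinearMap.add_apply, map_add, _root_.map_smul, hu, hWx]
      have hW0 : W = 0 := by
        have := (huniq _ hnew).trans (huniq B ⟨hB1, hB2⟩).symm
        rwa [add_eq_left] at this
      have : g (Pi.single j 1) = 0 := by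
        rw [← hWml, hW0, Matrix.mulVecLin_zero, LinearMap.zero_apply]
      rw [hgdef] at this
      simp only [LinearMap.smulRight_apply, LinearMap.proj_apply, Pi.single_eq_same,
        one_smul] at this
      exact hDv this
    exact rank_eq_of_ker_eq (le_antisymm hkerDM hMkerD)
  -- the two main equivalences
  have hLiff : (∃! C : Matrix (Fin m) (Fin n) ℂ, C * A * D = D ∧
      LinearMap.ker E.mulVecLin ≤ LinearMap.ker C.mulVecLin) ↔
      (D.rank = M.rank ∧ E.rank = M.rank) := by
    constructor
    · intro h
      have h' := h
      obtain ⟨C, hC, -⟩ := h'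
      exact ⟨hLD C hC, hLE h⟩
    · rintro ⟨hD, hE⟩
      exact ⟨D * P * E, hexL hD hE, fun C' hC' => huniqL hE C' (D * P * E) hC' (hexL hD hE)⟩
  have hRiff : (∃! B : Matrix (Fin m) (Fin n) ℂ, E * A * B = E ∧
      LinearMap.range B.mulVecLin ≤ LinearMap.range D.mulVecLin) ↔
      (D.rank = M.rank ∧ E.rank = M.rank) := by
    constructor
    · intro h
      have h' := h
      obtain ⟨B, hB, -⟩ := h'
      exact ⟨hRD h, hRE B hB⟩
    · rintro ⟨hD, hE⟩
      exact ⟨D * P * E, hexR hD hE, fun B' hB' => huniqR hD B' (D * P * E) hB' (hexR hD hE)⟩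
  refine ⟨hLiff.trans hRiff.symm, ?_, ?_⟩
  · rw [hLiff]
    constructor
    · rintro ⟨h1, h2⟩; exact ⟨h1.trans h2.symm, h2⟩
    · rintro ⟨h1, h2⟩; exact ⟨h1.trans h2, h2⟩
  · intro h
    obtain ⟨hD, hE⟩ := hLiff.mp h
    exact ⟨hexL hD hE, hexR hD hE⟩
end

section
/- Let A ∈ C^{n×m} and D, E ∈ C^{m×n}. Then the (D,E)-inverse of A exists if and only if rank(D) = rank(E) = rank(EAD), and in this case the (D,E)-inverse equals D(EAD)† E. -/
open Matrix

theorem stmt14 (n m : ℕ) (A : Matrix (Fin n) (Fin m) ℂ) (D E : Matrix (Fin m) (Fin n) ℂ)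
    (P : Matrix (Fin n) (Fin m) ℂ)
    (hP1 : (E * A * D) * P * (E * A * D) = E * A * D)
    (hP2 : P * (E * A * D) * P = P)
    (hP3 : ((E * A * D) * P)ᴴ = (E * A * D) * P)
    (hP4 : (P * (E * A * D))ᴴ = P * (E * A * D)) :
    ((∃ X : Matrix (Fin m) (Fin n) ℂ, X * A * D = D ∧ E * A * X = E ∧
        LinearMap.range X.mulVecLin ≤ LinearMap.range D.mulVecLin ∧
        LinearMap.ker E.mulVecLin ≤ LinearMap.ker X.mulVecLin) ↔
      (D.rank = E.rank ∧ E.rank = (E * A * D).rank)) ∧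
    ((D.rank = E.rank ∧ E.rank = (E * A * D).rank) →
      ((D * P * E) * A * D = D ∧ E * A * (D * P * E) = E ∧
        LinearMap.range (D * P * E).mulVecLin ≤ LinearMap.range D.mulVecLin ∧
        LinearMap.ker E.mulVecLin ≤ LinearMap.ker (D * P * E).mulVecLin)) := by
  set M : Matrix (Fin m) (Fin n) ℂ := E * A * D with hMdef
  -- basic inclusions that always hold
  have kerDM : LinearMap.ker D.mulVecLin ≤ LinearMap.ker M.mulVecLin := by
    intro v hv
    simp only [LinearMap.mem_ker, mulVecLin_apply] at hv ⊢
    rw [hMdef, ← Matrix.mulVec_mulVec, hv, Matrix.mulVec_zero]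
  have ranME : LinearMap.range M.mulVecLin ≤ LinearMap.range E.mulVecLin := by
    rintro x ⟨v, rfl⟩
    refine ⟨A *ᵥ D *ᵥ v, ?_⟩
    simp only [mulVecLin_apply, hMdef, Matrix.mulVec_mulVec]
    rw [Matrix.mul_assoc]
  -- rank-nullity bookkeeping
  have rn : ∀ (B : Matrix (Fin m) (Fin n) ℂ),
      Module.finrank ℂ (LinearMap.range B.mulVecLin) +
        Module.finrank ℂ (LinearMap.ker B.mulVecLin) = n := by
    intro B
    simpa using LinearMap.finrank_range_add_finrank_ker B.mulVecLin
  have rnM : Module.finrank ℂ (LinearMap.range M.mulVecLin) +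
        Module.finrank ℂ (LinearMap.ker M.mulVecLin) = n := by
    simpa using LinearMap.finrank_range_add_finrank_ker M.mulVecLin
  -- key: if ranks agree then the algebraic identities hold
  have key : (D.rank = E.rank ∧ E.rank = M.rank) →
      ((D * P * E) * A * D = D ∧ E * A * (D * P * E) = E ∧
        LinearMap.range (D * P * E).mulVecLin ≤ LinearMap.range D.mulVecLin ∧
        LinearMap.ker E.mulVecLin ≤ LinearMap.ker (D * P * E).mulVecLin) := by
    rintro ⟨h1, h2⟩
    have hDM : D.rank = M.rank := h1.trans h2
    have hEM : E.rank = M.rank := h2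
    -- ker M = ker D
    have kerEq : LinearMap.ker D.mulVecLin = LinearMap.ker M.mulVecLin := by
      apply Submodule.eq_of_le_of_finrank_eq kerDM
      have := rn D
      unfold Matrix.rank at hDM
      omega
    -- range M = range E
    have ranEq : LinearMap.range M.mulVecLin = LinearMap.range E.mulVecLin := by
      apply Submodule.eq_of_le_of_finrank_eq ranME
      exact hEM.symm
    -- D * P * M = D
    have hDPM : D * P * M = D := by
      apply Matrix.toLin'.injective
      apply LinearMap.ext
      intro v
      simp only [Matrix.toLin'_apply]
      have hv : P *ᵥ M *ᵥ v - v ∈ LinearMap.ker M.mulVecLin := by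
        simp only [LinearMap.mem_ker, mulVecLin_apply, Matrix.mulVec_sub, sub_eq_zero,
          Matrix.mulVec_mulVec, ← Matrix.mul_assoc, hP1]
      rw [← kerEq] at hv
      simp only [LinearMap.mem_ker, mulVecLin_apply, Matrix.mulVec_sub, sub_eq_zero,
        Matrix.mulVec_mulVec] at hv
      rw [← Matrix.mul_assoc] at hv
      exact hv
    -- M * P * E = E
    have hMPE : M * P * E = E := by
      apply Matrix.toLin'.injective
      apply LinearMap.ext
      intro v
      simp only [Matrix.toLin'_apply]
      have hv : E *ᵥ v ∈ LinearMap.range M.mulVecLin := by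
        rw [ranEq]; exact ⟨v, rfl⟩
      obtain ⟨u, hu⟩ := hv
      simp only [mulVecLin_apply] at hu
      rw [← Matrix.mulVec_mulVec, ← Matrix.mulVec_mulVec, ← hu,
        Matrix.mulVec_mulVec, Matrix.mulVec_mulVec, hP1]
    refine ⟨?_, ?_, ?_, ?_⟩
    · have h := hDPM; rw [hMdef] at h
      simpa only [Matrix.mul_assoc] using h
    · have h := hMPE; rw [hMdef] at h
      simpa only [Matrix.mul_assoc] using h
    · rintro x ⟨v, rfl⟩
      exact ⟨(P * E).mulVecLin v, by simp [Matrix.mulVecLin_mul, Matrix.mul_assoc]⟩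
    · intro v hv
      simp only [LinearMap.mem_ker, mulVecLin_apply] at hv ⊢
      rw [← Matrix.mulVec_mulVec, ← Matrix.mulVec_mulVec, hv]
      simp
  constructor
  · constructor
    · rintro ⟨X, hXAD, hEAX, hranX, hkerX⟩
      -- ker M ≤ ker D
      have kerMD : LinearMap.ker M.mulVecLin ≤ LinearMap.ker D.mulVecLin := by
        intro v hv
        simp only [LinearMap.mem_ker, mulVecLin_apply] at hv ⊢
        have h1 : A *ᵥ D *ᵥ v ∈ LinearMap.ker E.mulVecLin := by
          simp only [LinearMap.mem_ker, mulVecLin_apply, Matrix.mulVec_mulVec]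
          simpa [hMdef, Matrix.mul_assoc] using hv
        have h2 := hkerX h1
        simp only [LinearMap.mem_ker, mulVecLin_apply, Matrix.mulVec_mulVec] at h2
        calc D *ᵥ v = (X * A * D) *ᵥ v := by rw [hXAD]
          _ = 0 := by
            rw [Matrix.mul_assoc, ← Matrix.mulVec_mulVec, Matrix.mulVec_mulVec]
            exact h2
      -- range E ≤ range M
      have ranEM : LinearMap.range E.mulVecLin ≤ LinearMap.range M.mulVecLin := by
        intro x hx
        obtain ⟨v, rfl⟩ := hx
        have hXv : X.mulVecLin v ∈ LinearMap.range D.mulVecLin :=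
          hranX ⟨v, rfl⟩
        obtain ⟨u, hu⟩ := hXv
        refine ⟨u, ?_⟩
        simp only [mulVecLin_apply] at hu ⊢
        calc M *ᵥ u = E *ᵥ A *ᵥ D *ᵥ u := by
              rw [hMdef, ← Matrix.mulVec_mulVec, ← Matrix.mulVec_mulVec]
          _ = E *ᵥ A *ᵥ X *ᵥ v := by rw [hu]
          _ = (E * A * X) *ᵥ v := by
              rw [← Matrix.mulVec_mulVec, ← Matrix.mulVec_mulVec]
          _ = E *ᵥ v := by rw [hEAX]
      have e1 : LinearMap.ker D.mulVecLin = LinearMap.ker M.mulVecLin :=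
        le_antisymm kerDM kerMD
      have e2 : LinearMap.range M.mulVecLin = LinearMap.range E.mulVecLin :=
        le_antisymm ranME ranEM
      have hDM : D.rank = M.rank := by
        have := rn D
        unfold Matrix.rank
        rw [e1] at this
        omega
      have hEM : E.rank = M.rank := by
        unfold Matrix.rank
        rw [e2]
      exact ⟨hDM.trans hEM.symm, hEM⟩
    · intro h
      obtain ⟨g1, g2, g3, g4⟩ := key h
      exact ⟨D * P * E, g1, g2, g3, g4⟩
  · exact key
end

section
/- Let A ∈ C^{n×m} and D, E ∈ C^{m×n} be such that the (D,E)-inverse X of A exists. Then range(D) ⊕ ker(A) = ker(AXA − A), and consequently rank(A) = rank(D) + rank(AXA − A). -/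
open Matrix

theorem stmt16 (n m : ℕ) (A : Matrix (Fin n) (Fin m) ℂ) (D E X : Matrix (Fin m) (Fin n) ℂ)
    (h1 : X * A * D = D) (h2 : E * A * X = E)
    (h3 : LinearMap.range X.mulVecLin ≤ LinearMap.range D.mulVecLin)
    (h4 : LinearMap.ker E.mulVecLin ≤ LinearMap.ker X.mulVecLin) :
    (Disjoint (LinearMap.range D.mulVecLin) (LinearMap.ker A.mulVecLin) ∧
      LinearMap.range D.mulVecLin ⊔ LinearMap.ker A.mulVecLin =
        LinearMap.ker (A * X * A - A).mulVecLin) ∧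
    A.rank = D.rank + (A * X * A - A).rank := by
  have hdisj : Disjoint (LinearMap.range D.mulVecLin) (LinearMap.ker A.mulVecLin) := by
    rw [disjoint_iff, Submodule.eq_bot_iff]
    rintro v ⟨⟨u, rfl⟩, hker⟩
    have hker' : A.mulVec (D.mulVec u) = 0 := hker
    show D.mulVecLin u = 0
    have : D.mulVec u = (X * A * D).mulVec u := by rw [h1]
    simp only [mulVecLin_apply]
    rw [this, Matrix.mul_assoc, ← Matrix.mulVec_mulVec, ← Matrix.mulVec_mulVec, hker',
      Matrix.mulVec_zero]
  have hsup : LinearMap.range D.mulVecLin ⊔ LinearMap.ker A.mulVecLin =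
      LinearMap.ker (A * X * A - A).mulVecLin := by
    apply le_antisymm
    · apply sup_le
      · rintro v ⟨u, rfl⟩
        show (A * X * A - A).mulVec (D.mulVec u) = 0
        have key : A * X * A * D = A * D := by
          rw [Matrix.mul_assoc A X A, Matrix.mul_assoc A (X * A) D, h1]
        rw [Matrix.mulVec_mulVec, Matrix.sub_mul, key, sub_self, Matrix.zero_mulVec]
      · intro v hv
        have hv' : A.mulVec v = 0 := hv
        show (A * X * A - A).mulVec v = 0
        rw [Matrix.sub_mulVec, hv', sub_zero, Matrix.mul_assoc, ← Matrix.mulVec_mulVec,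
          ← Matrix.mulVec_mulVec, hv', Matrix.mulVec_zero, Matrix.mulVec_zero]
    · intro v hv
      have hv0 : (A * X * A - A).mulVec v = 0 := hv
      rw [Matrix.sub_mulVec, sub_eq_zero] at hv0
      have hXA : X.mulVec (A.mulVec v) ∈ LinearMap.range D.mulVecLin :=
        h3 ⟨A.mulVec v, rfl⟩
      have hker : v - X.mulVec (A.mulVec v) ∈ LinearMap.ker A.mulVecLin := by
        show A.mulVec (v - X.mulVec (A.mulVec v)) = 0
        rw [Matrix.mulVec_sub, Matrix.mulVec_mulVec, Matrix.mulVec_mulVec, hv0, sub_self]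
      have : v = X.mulVec (A.mulVec v) + (v - X.mulVec (A.mulVec v)) := by ring_nf
      rw [this]
      exact Submodule.add_mem_sup hXA hker
  refine ⟨⟨hdisj, hsup⟩, ?_⟩
  have e1 : A.rank + Module.finrank ℂ (LinearMap.ker A.mulVecLin) = m := by
    have := LinearMap.finrank_range_add_finrank_ker A.mulVecLin
    simpa [Matrix.rank] using this
  have e2 : (A * X * A - A).rank
      + Module.finrank ℂ (LinearMap.ker (A * X * A - A).mulVecLin) = m := by
    have := LinearMap.finrank_range_add_finrank_ker (A * X * A - A).mulVecLin
    simpa [Matrix.rank] using this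
  have e3 : Module.finrank ℂ (LinearMap.ker (A * X * A - A).mulVecLin)
      = D.rank + Module.finrank ℂ (LinearMap.ker A.mulVecLin) := by
    rw [← hsup]
    have := Submodule.finrank_sup_add_finrank_inf_eq (LinearMap.range D.mulVecLin)
      (LinearMap.ker A.mulVecLin)
    rw [hdisj.eq_bot, finrank_bot ℂ, add_zero] at this
    rw [this, Matrix.rank]
  omega
end

section
/- Let A ∈ C^{n×m} and D, E ∈ C^{m×n} be such that the (D,E)-inverse X of A exists. Then the following are equivalent: (i) AXA = A; (ii) rank(A) = rank(D); (iii) range(D) ⊕ ker(A) = C^m; (iv) range(A) ⊕ ker(E) = C^n. -/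
/-!
Writing the (D,E)-inverse as linear maps `x, d, e : W → V` and `a : V → W`, the identities
`x a d = d` and `e a x = e` together with the inclusions force `range x = range d` and
`ker x = ker e`, so that `rank e = rank d`. They also make `range d ∩ ker a = 0` and
`range a + ker e = W` hold unconditionally; hence each complement condition is a dimension count,
which rank–nullity for `a` (resp. `e`) turns into `rank a = rank d`. Finally `a x a = a` is
equivalent to `range d ⊕ ker a = V`: one direction splits `v = x a v + (v - x a v)`, the other
checks `a x a = a` separately on `range d` and on `ker a`.
-/

open Module Submodule LinearMap

section Complements

variable {K V : Type*} [DivisionRing K] [AddCommGroup V] [Module K V] [FiniteDimensional K V]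

theorem Submodule.isCompl_iff_finrank_add_eq_of_disjoint {s t : Submodule K V}
    (h : Disjoint s t) : IsCompl s t ↔ finrank K s + finrank K t = finrank K V := by
  rw [isCompl_iff, codisjoint_iff, eq_top_iff_finrank_eq, ← finrank_sup_add_finrank_inf_eq,
    h.eq_bot, finrank_bot, add_zero]
  exact and_iff_right h

theorem Submodule.isCompl_iff_finrank_add_eq_of_codisjoint {s t : Submodule K V}
    (h : Codisjoint s t) : IsCompl s t ↔ finrank K s + finrank K t = finrank K V := by
  rw [isCompl_iff, disjoint_iff, ← finrank_eq_zero (R := K), ← finrank_sup_add_finrank_inf_eq,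
    h.eq_top, finrank_top]
  exact (and_iff_left h).trans (by omega)

end Complements

structure LinearMap.IsDEInverse {R V W : Type*} [Semiring R] [AddCommMonoid V] [Module R V]
    [AddCommMonoid W] [Module R W] (a : V →ₗ[R] W) (d e x : W →ₗ[R] V) : Prop where
  xad : x ∘ₗ a ∘ₗ d = d
  eax : e ∘ₗ a ∘ₗ x = e
  range_le : range x ≤ range d
  ker_le : ker e ≤ ker x

namespace LinearMap.IsDEInverse

section Ring

variable {R V W : Type*} [Ring R] [AddCommGroup V] [Module R V] [AddCommGroup W] [Module R W]
  {a : V →ₗ[R] W} {d e x : W →ₗ[R] V}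

theorem range_eq (h : IsDEInverse a d e x) : range x = range d :=
  h.range_le.antisymm ((congrArg range h.xad).symm.trans_le (range_comp_le_range _ _))

theorem ker_eq (h : IsDEInverse a d e x) : ker x = ker e :=
  ((ker_le_ker_comp x (e ∘ₗ a)).trans_eq (congrArg ker h.eax)).antisymm h.ker_le

theorem disjoint_range_ker (h : IsDEInverse a d e x) : Disjoint (range d) (ker a) := by
  rw [disjoint_iff, eq_bot_iff]
  rintro _ ⟨⟨u, rfl⟩, hu⟩
  rw [← h.xad, comp_apply, comp_apply, (mem_ker.1 hu : a (d u) = 0), map_zero]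
  rfl

theorem codisjoint_range_self_ker (h : IsDEInverse a d e x) : Codisjoint (range a) (ker e) := by
  refine codisjoint_iff.2 (eq_top_iff'.2 fun w ↦ ?_)
  refine mem_sup.2 ⟨a (x w), mem_range_self _ _, w - a (x w), ?_, add_sub_cancel _ _⟩
  rw [mem_ker, map_sub, sub_eq_zero]
  exact (congrArg (· w) h.eax).symm

theorem isCompl_range_ker_iff (h : IsDEInverse a d e x) :
    IsCompl (range d) (ker a) ↔ a ∘ₗ x ∘ₗ a = a := by
  refine ⟨fun hc ↦ ext_on_codisjoint hc.codisjoint ?_ ?_, fun haxa ↦ ⟨h.disjoint_range_ker, ?_⟩⟩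
  · rintro _ ⟨u, rfl⟩
    exact congrArg a (congrArg (· u) h.xad)
  · intro v hv
    simp [mem_ker.1 hv]
  · refine codisjoint_iff.2 (eq_top_iff'.2 fun v ↦ ?_)
    refine mem_sup.2 ⟨x (a v), h.range_le (mem_range_self _ _), v - x (a v), ?_,
      add_sub_cancel _ _⟩
    rw [mem_ker, map_sub, sub_eq_zero]
    exact (congrArg (· v) haxa).symm

end Ring

variable {K V W : Type*} [DivisionRing K] [AddCommGroup V] [Module K V] [AddCommGroup W]
  [Module K W] {a : V →ₗ[K] W} {d e x : W →ₗ[K] V}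

theorem finrank_range_eq [FiniteDimensional K W] (h : IsDEInverse a d e x) :
    finrank K (range e) = finrank K (range d) := by
  have he := e.finrank_range_add_finrank_ker
  have hx := x.finrank_range_add_finrank_ker
  rw [h.range_eq, h.ker_eq] at hx
  omega

theorem finrank_range_eq_iff_isCompl_range_ker [FiniteDimensional K V]
    (h : IsDEInverse a d e x) :
    finrank K (range a) = finrank K (range d) ↔ IsCompl (range d) (ker a) := by
  rw [isCompl_iff_finrank_add_eq_of_disjoint h.disjoint_range_ker,
    ← a.finrank_range_add_finrank_ker]
  omega

theorem finrank_range_eq_iff_isCompl_range_self_ker [FiniteDimensional K W]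
    (h : IsDEInverse a d e x) :
    finrank K (range a) = finrank K (range d) ↔ IsCompl (range a) (ker e) := by
  rw [isCompl_iff_finrank_add_eq_of_codisjoint h.codisjoint_range_self_ker,
    ← e.finrank_range_add_finrank_ker, h.finrank_range_eq]
  omega

end LinearMap.IsDEInverse

open Matrix

theorem stmt17 (n m : ℕ) (A : Matrix (Fin n) (Fin m) ℂ) (D E X : Matrix (Fin m) (Fin n) ℂ)
    (h1 : X * A * D = D) (h2 : E * A * X = E)
    (h3 : LinearMap.range X.mulVecLin ≤ LinearMap.range D.mulVecLin)
    (h4 : LinearMap.ker E.mulVecLin ≤ LinearMap.ker X.mulVecLin) :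
    (A * X * A = A ↔ A.rank = D.rank) ∧
    (A.rank = D.rank ↔
      IsCompl (LinearMap.range D.mulVecLin) (LinearMap.ker A.mulVecLin)) ∧
    (IsCompl (LinearMap.range D.mulVecLin) (LinearMap.ker A.mulVecLin) ↔
      IsCompl (LinearMap.range A.mulVecLin) (LinearMap.ker E.mulVecLin)) := by
  have h : IsDEInverse A.mulVecLin D.mulVecLin E.mulVecLin X.mulVecLin :=
    ⟨by simpa only [mulVecLin_mul, Matrix.mul_assoc] using congrArg mulVecLin h1,
      by simpa only [mulVecLin_mul, Matrix.mul_assoc] using congrArg mulVecLin h2, h3, h4⟩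
  have haxa : A * X * A = A ↔ A.mulVecLin ∘ₗ X.mulVecLin ∘ₗ A.mulVecLin = A.mulVecLin := by
    simp only [← toLin'_apply', ← toLin'_mul, Matrix.mul_assoc, toLin'.injective.eq_iff]
  refine ⟨?_, h.finrank_range_eq_iff_isCompl_range_ker, ?_⟩
  · rw [haxa, ← h.isCompl_range_ker_iff]
    exact h.finrank_range_eq_iff_isCompl_range_ker.symm
  · exact h.finrank_range_eq_iff_isCompl_range_ker.symm.trans
      h.finrank_range_eq_iff_isCompl_range_self_ker
end

section
/- Let A ∈ C^{n×m} and D, E ∈ C^{m×n} be such that the (D,E)-inverse X of A exists. Then XA and AX are idempotent, range(XA) = range(D), range(AX) = range(AD), ker(AX) = ker(E), and ker(XA) = ker(EA). -/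
open Matrix

theorem stmt18 (n m : ℕ) (A : Matrix (Fin n) (Fin m) ℂ) (D E X : Matrix (Fin m) (Fin n) ℂ)
    (h1 : X * A * D = D) (h2 : E * A * X = E)
    (h3 : LinearMap.range X.mulVecLin ≤ LinearMap.range D.mulVecLin)
    (h4 : LinearMap.ker E.mulVecLin ≤ LinearMap.ker X.mulVecLin) :
    (X * A) * (X * A) = X * A ∧ (A * X) * (A * X) = A * X ∧
    LinearMap.range (X * A).mulVecLin = LinearMap.range D.mulVecLin ∧
    LinearMap.range (A * X).mulVecLin = LinearMap.range (A * D).mulVecLin ∧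
    LinearMap.ker (A * X).mulVecLin = LinearMap.ker E.mulVecLin ∧
    LinearMap.ker (X * A).mulVecLin = LinearMap.ker (E * A).mulVecLin := by
  -- Extract Y with X = D * Y from h3
  have hy : ∀ j : Fin n, ∃ y, D.mulVecLin y = X.mulVecLin (Pi.single j 1) := by
    intro j
    exact h3 ⟨Pi.single j 1, rfl⟩
  choose y hy using hy
  set Y : Matrix (Fin n) (Fin n) ℂ := Matrix.of fun i j => y j i with hYdef
  have hXDY : X = D * Y := by
    ext i j
    have := congrFun (hy j) i
    simp only [Matrix.mulVecLin_apply, Matrix.mulVec, dotProduct, Pi.single_apply,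
      mul_ite, mul_one, mul_zero, Finset.sum_ite_eq', Finset.mem_univ, if_true] at this
    simp [Matrix.mul_apply, hYdef, Matrix.mulVec, dotProduct] at this ⊢
    rw [← this]
  have hXAX : X * A * X = X := by
    calc X * A * X = X * A * (D * Y) := by rw [← hXDY]
    _ = (X * A * D) * Y := by simp only [Matrix.mul_assoc]
    _ = D * Y := by rw [h1]
    _ = X := hXDY.symm
  have hXker : ∀ v, E.mulVecLin v = 0 → X.mulVecLin v = 0 := fun v hv => h4 hv
  refine ⟨?_, ?_, ?_, ?_, ?_, ?_⟩
  · calc (X * A) * (X * A) = (X * A * X) * A := by simp only [Matrix.mul_assoc]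
    _ = X * A := by rw [hXAX]
  · calc (A * X) * (A * X) = A * (X * A * X) := by simp only [Matrix.mul_assoc]
    _ = A * X := by rw [hXAX]
  · apply le_antisymm
    · rw [Matrix.mulVecLin_mul]
      exact le_trans (LinearMap.range_comp_le_range _ _) h3
    · rintro _ ⟨v, rfl⟩
      refine ⟨D.mulVecLin v, ?_⟩
      simp only [Matrix.mulVecLin_apply, Matrix.mulVec_mulVec, h1]
  · apply le_antisymm
    · rintro _ ⟨v, rfl⟩
      refine ⟨Y.mulVecLin v, ?_⟩
      simp only [Matrix.mulVecLin_apply, Matrix.mulVec_mulVec]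
      rw [Matrix.mul_assoc, ← hXDY]
    · rintro _ ⟨v, rfl⟩
      refine ⟨(A * D).mulVecLin v, ?_⟩
      simp only [Matrix.mulVecLin_apply, Matrix.mulVec_mulVec]
      have hADX : A * X * (A * D) = A * D := by
        calc A * X * (A * D) = A * (X * A * D) := by simp only [Matrix.mul_assoc]
        _ = A * D := by rw [h1]
      rw [hADX]
  · ext v
    simp only [LinearMap.mem_ker, Matrix.mulVecLin_apply]
    constructor
    · intro hv
      have : E *ᵥ v = (E * A * X) *ᵥ v := by rw [h2]
      rw [this, Matrix.mul_assoc, ← Matrix.mulVec_mulVec, hv, Matrix.mulVec_zero]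
    · intro hv
      have hX : X *ᵥ v = 0 := hXker v (by simpa using hv)
      rw [← Matrix.mulVec_mulVec, hX, Matrix.mulVec_zero]
  · ext v
    simp only [LinearMap.mem_ker, Matrix.mulVecLin_apply]
    constructor
    · intro hv
      have hEA : E * A = (E * A) * (X * A) := by
        calc E * A = (E * A * X) * A := by rw [h2]
        _ = (E * A) * (X * A) := by simp only [Matrix.mul_assoc]
      rw [hEA, ← Matrix.mulVec_mulVec, hv, Matrix.mulVec_zero]
    · intro hv
      have hX : X *ᵥ (A *ᵥ v) = 0 := by
        apply hXker
        simpa [Matrix.mulVec_mulVec] using hv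
      rw [← Matrix.mulVec_mulVec, hX]
end

section
/- Let A ∈ C^{n×m}, D ∈ C^{m×n}, and suppose rank(D) = 1 with full rank factorization D = d₁ d₂* where d₁ ∈ C^m and d₂ ∈ C^n are nonzero column vectors. Then the inverse of A along D exists if and only if tr(AD) ≠ 0, and in this case the inverse of A along D equals (1/tr(AD)) · D. -/
/-! A rank-one matrix `D = u vᵀ` satisfies `D A D = tr(A D) • D`. If the trace is nonzero, this
identity says directly that `tr(A D)⁻¹ • D` is the inverse along `D`. If it vanishes, `D A D = 0`;
an inverse `X` along `D` has `X = D Y` for some `Y`, so `D = D A X = D A D Y = 0`, which is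
impossible. -/

open Matrix

namespace Matrix

variable {K R : Type*} {m n : Type*} [Fintype m] [Fintype n]

def IsInverseAlong [CommRing R] (A : Matrix n m R) (D X : Matrix m n R) : Prop :=
  X * A * D = D ∧ D * A * X = D ∧
    LinearMap.range X.mulVecLin ≤ LinearMap.range D.mulVecLin ∧
    LinearMap.ker D.mulVecLin ≤ LinearMap.ker X.mulVecLin

theorem vecMulVec_mul_mul_vecMulVec [CommSemiring R] (A : Matrix n m R) (u : m → R)
    (v : n → R) :
    vecMulVec u v * A * vecMulVec u v = trace (A * vecMulVec u v) • vecMulVec u v := by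
  rw [Matrix.mul_assoc, mul_vecMulVec, vecMulVec_mul_vecMulVec, vecMulVec_smul, trace_vecMulVec,
    dotProduct_comm]

theorem isInverseAlong_inv_smul [Field K] {A : Matrix n m K} {D : Matrix m n K} {c : K}
    (hc : c ≠ 0) (hDAD : D * A * D = c • D) : IsInverseAlong A D (c⁻¹ • D) := by
  refine ⟨?_, ?_, ?_, ?_⟩
  · rw [Matrix.smul_mul, Matrix.smul_mul, hDAD, smul_smul, inv_mul_cancel₀ hc, one_smul]
  · rw [Matrix.mul_smul, hDAD, smul_smul, inv_mul_cancel₀ hc, one_smul]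
  · rintro _ ⟨v, rfl⟩
    exact ⟨c⁻¹ • v, by simp only [mulVecLin_apply, mulVec_smul, smul_mulVec]⟩
  · intro v hv
    rw [LinearMap.mem_ker, mulVecLin_apply] at hv ⊢
    rw [smul_mulVec, hv, smul_zero]

theorem eq_zero_of_isInverseAlong_of_mul_mul_eq_zero [CommRing R] {A : Matrix n m R}
    {D X : Matrix m n R} (hX : IsInverseAlong A D X) (hDAD : D * A * D = 0) : D = 0 := by
  obtain ⟨-, hDAX, hrange, -⟩ := hX
  refine ext_iff_mulVec.mpr fun v => ?_
  obtain ⟨w, hw⟩ := hrange (LinearMap.mem_range_self X.mulVecLin v)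
  rw [mulVecLin_apply, mulVecLin_apply] at hw
  calc D *ᵥ v = (D * A) *ᵥ (X *ᵥ v) := by rw [mulVec_mulVec, hDAX]
    _ = (D * A * D) *ᵥ w := by rw [← hw, mulVec_mulVec]
    _ = 0 *ᵥ v := by rw [hDAD, zero_mulVec, zero_mulVec]

end Matrix

theorem stmt19 (n m : ℕ) (A : Matrix (Fin n) (Fin m) ℂ) (D : Matrix (Fin m) (Fin n) ℂ)
    (d1 : Fin m → ℂ) (d2 : Fin n → ℂ) (hd1 : d1 ≠ 0) (hd2 : d2 ≠ 0)
    (hD : D = Matrix.vecMulVec d1 (star d2)) :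
    ((∃ X : Matrix (Fin m) (Fin n) ℂ, X * A * D = D ∧ D * A * X = D ∧
        LinearMap.range X.mulVecLin ≤ LinearMap.range D.mulVecLin ∧
        LinearMap.ker D.mulVecLin ≤ LinearMap.ker X.mulVecLin) ↔
      Matrix.trace (A * D) ≠ 0) ∧
    (Matrix.trace (A * D) ≠ 0 →
      ((Matrix.trace (A * D))⁻¹ • D) * A * D = D ∧
      D * A * ((Matrix.trace (A * D))⁻¹ • D) = D ∧
      LinearMap.range ((Matrix.trace (A * D))⁻¹ • D).mulVecLin ≤
        LinearMap.range D.mulVecLin ∧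
      LinearMap.ker D.mulVecLin ≤
        LinearMap.ker ((Matrix.trace (A * D))⁻¹ • D).mulVecLin) := by
  have hDAD : D * A * D = trace (A * D) • D := hD ▸ vecMulVec_mul_mul_vecMulVec A d1 (star d2)
  have hD0 : D ≠ 0 := by
    obtain ⟨i, hi⟩ := Function.ne_iff.mp hd1
    obtain ⟨j, hj⟩ := Function.ne_iff.mp hd2
    simp only [Pi.zero_apply] at hi hj
    intro h0
    simpa [hD, vecMulVec_apply, hi, hj] using congr_fun₂ h0 i j
  refine ⟨⟨?_, fun ht => ⟨_, isInverseAlong_inv_smul ht hDAD⟩⟩,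
    fun ht => isInverseAlong_inv_smul ht hDAD⟩
  rintro ⟨X, hX⟩ ht
  exact hD0 (eq_zero_of_isInverseAlong_of_mul_mul_eq_zero hX (by rw [hDAD, ht, zero_smul]))
end
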